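/- arXiv:2511.21602 — 5 statements merged into one kernel-verified Lean document; each statement's English description precedes it below -/
import Mathlib

section
/- If X_1, X_2, ... are i.i.d. positive-integer-valued random variables with P(X_i = k) = 1/(k(k+1)) for k ≥ 1, then for any constants C > 0 and ε > 0 and any positive integer j, P(∑_{i=1}^j X_i ≥ C j^{1+ε}) ≤ j^{-ε} (1 + C^{-1}(1+ε) log j). -/
/-!
Truncate every summand at `M = ⌊y⌋`, where `y = C j^(1+ε)`. If the sum reaches `y`, then either
some `X_i` exceeds `M`, which by the union bound has probability at most `j / (M + 1)`, or the
truncated sum reaches `y`, which by Markov's inequality has probability at most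
`j E[X; X ≤ M] / y = j (H_(M+1) - 1) / y`. Since `H_M ≤ 1 + log M` and `M ≤ y < M + 1`, the sum
of the two is at most `j (1 + log y) / y`, and `log C ≤ C - 1` turns this into the stated bound.
When `y ≤ 1` the right-hand side is already at least `1`.
-/

open MeasureTheory ProbabilityTheory
open scoped ENNReal

theorem rpow_neg_eq_div {j : ℝ} (hj : 0 < j) (ε : ℝ) : j ^ (-ε) = j / j ^ (1 + ε) := by
  rw [eq_div_iff (Real.rpow_pos_of_pos hj _).ne', ← Real.rpow_add hj]
  simp

theorem sum_range_one_div_succ_mul_succ_succ (M : ℕ) :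
    ∑ k ∈ Finset.range M, (1 : ℝ) / ((k + 1) * (k + 2)) = 1 - 1 / (M + 1) := by
  induction M with
  | zero => simp
  | succ M ih =>
    rw [Finset.sum_range_succ, ih]
    push_cast
    field_simp
    ring

theorem harmonic_succ_sub_one (M : ℕ) :
    (harmonic (M + 1) : ℝ) - 1 = ∑ k ∈ Finset.range M, (1 : ℝ) / (k + 2) := by
  simp only [harmonic, Finset.sum_range_succ', Rat.cast_add, Rat.cast_sum]
  push_cast
  ring_nf

theorem div_add_harmonic_le_two_add_log {M : ℕ} {y : ℝ} (hM : 1 ≤ M) (hMy : M ≤ y)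
    (hyM : y ≤ M + 1) : y / (M + 1) + harmonic (M + 1) ≤ 2 + Real.log y := by
  have hM0 : (0 : ℝ) < M := by exact_mod_cast hM
  have hy0 : 0 < y := hM0.trans_le hMy
  have hH : (harmonic M : ℝ) ≤ 1 + Real.log M := harmonic_le_one_add_log M
  have hlog : (y - M) / y ≤ Real.log y - Real.log M := by
    have := Real.one_sub_inv_le_log_of_pos (div_pos hy0 hM0)
    rw [Real.log_div hy0.ne' hM0.ne', inv_div] at this
    rwa [sub_div, div_self hy0.ne']
  have hgap : (y - M) / (M + 1) ≤ (y - M) / y :=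
    div_le_div_of_nonneg_left (sub_nonneg.2 hMy) hy0 (by linarith)
  have hsplit : y / (M + 1) + (M + 1 : ℝ)⁻¹ = 1 + (y - M) / (M + 1) := by field_simp; ring
  rw [harmonic_succ]
  push_cast
  linarith

theorem mul_one_add_log_div_le {C ε j : ℝ} (hC : 0 < C) (hj : 0 < j) :
    j * (1 + Real.log (C * j ^ (1 + ε))) / (C * j ^ (1 + ε))
      ≤ j ^ (-ε) * (1 + C⁻¹ * (1 + ε) * Real.log j) := by
  have hx : 0 < j ^ (1 + ε) := Real.rpow_pos_of_pos hj _
  have hlog : Real.log (C * j ^ (1 + ε)) = Real.log C + (1 + ε) * Real.log j := by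
    rw [Real.log_mul hC.ne' hx.ne', Real.log_rpow hj]
  have hC1 : Real.log C ≤ C - 1 := Real.log_le_sub_one_of_pos hC
  calc j * (1 + Real.log (C * j ^ (1 + ε))) / (C * j ^ (1 + ε))
      ≤ j * (C + (1 + ε) * Real.log j) / (C * j ^ (1 + ε)) := by
        gcongr j * ?_ / _; linarith
    _ = j ^ (-ε) * (1 + C⁻¹ * (1 + ε) * Real.log j) := by
        rw [rpow_neg_eq_div hj]; field_simp

theorem one_le_rpow_neg_mul {C ε j : ℝ} (hC : 0 < C) (hε : 0 ≤ ε) (hj : 1 ≤ j)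
    (hy : C * j ^ (1 + ε) ≤ 1) : 1 ≤ j ^ (-ε) * (1 + C⁻¹ * (1 + ε) * Real.log j) := by
  have hj0 : 0 < j := by linarith
  have hlogj : 0 ≤ Real.log j := Real.log_nonneg hj
  have hexp : 1 - ε * Real.log j ≤ j ^ (-ε) := by
    rw [Real.rpow_def_of_pos hj0]
    linarith [Real.add_one_le_exp (Real.log j * -ε)]
  have hjC : j ≤ j ^ (-ε) * C⁻¹ := by
    have : j ^ (-ε) * C⁻¹ = j / (C * j ^ (1 + ε)) := by rw [rpow_neg_eq_div hj0]; field_simp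
    exact this ▸ le_div_self hj0.le (by positivity) hy
  have hlog_term : (1 + ε) * Real.log j ≤ j ^ (-ε) * C⁻¹ * ((1 + ε) * Real.log j) :=
    calc (1 + ε) * Real.log j ≤ j * ((1 + ε) * Real.log j) :=
          le_mul_of_one_le_left (by positivity) hj
      _ ≤ _ := by gcongr
  linarith

theorem measure_le_sum_le_tail_add_truncated {Ω ι : Type*} [MeasurableSpace Ω] (μ : Measure Ω)
    {X : ι → Ω → ℕ} (hX : ∀ i, Measurable (X i)) (s : Finset ι) (M : ℕ) {y : ℝ} (hy : 0 < y) :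
    μ {ω | y ≤ ∑ i ∈ s, (X i ω : ℝ)} ≤ ∑ i ∈ s, μ {ω | M < X i ω} +
      (∑ i ∈ s, ∫⁻ ω, (if X i ω ≤ M then (X i ω : ℝ≥0∞) else 0) ∂μ) / ENNReal.ofReal y := by
  set T : Ω → ℝ≥0∞ := fun ω ↦ ∑ i ∈ s, if X i ω ≤ M then (X i ω : ℝ≥0∞) else 0
  have hT : ∀ i, Measurable fun ω ↦ if X i ω ≤ M then (X i ω : ℝ≥0∞) else 0 := fun i ↦
    (measurable_from_top (f := fun k : ℕ ↦ if k ≤ M then (k : ℝ≥0∞) else 0)).comp (hX i)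
  have hsub : {ω | y ≤ ∑ i ∈ s, (X i ω : ℝ)} ⊆
      (⋃ i ∈ s, {ω | M < X i ω}) ∪ {ω | ENNReal.ofReal y ≤ T ω} := by
    intro ω hω
    by_cases hbig : ∃ i ∈ s, M < X i ω
    · obtain ⟨i, hi, hXi⟩ := hbig
      exact Or.inl (Set.mem_biUnion hi hXi)
    · push Not at hbig
      have hTω : T ω = ((∑ i ∈ s, X i ω : ℕ) : ℝ≥0∞) := by
        rw [Nat.cast_sum]
        exact Finset.sum_congr rfl fun i hi ↦ if_pos (hbig i hi)
      refine Or.inr ?_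
      simp only [Set.mem_ofPred_eq, hTω, ← ENNReal.ofReal_natCast]
      exact ENNReal.ofReal_le_ofReal (by exact_mod_cast hω)
  calc μ {ω | y ≤ ∑ i ∈ s, (X i ω : ℝ)}
      ≤ μ (⋃ i ∈ s, {ω | M < X i ω}) + μ {ω | ENNReal.ofReal y ≤ T ω} :=
        (measure_mono hsub).trans (measure_union_le _ _)
    _ ≤ ∑ i ∈ s, μ {ω | M < X i ω} + (∫⁻ ω, T ω ∂μ) / ENNReal.ofReal y := by
        gcongr
        · exact measure_biUnion_finset_le _ _
        · exact meas_ge_le_lintegral_div (Finset.measurable_sum _ fun i _ ↦ hT i).aemeasurable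
            (by simpa using hy) ENNReal.ofReal_ne_top
    _ = _ := by rw [lintegral_finsetSum _ fun i _ ↦ hT i]

theorem lintegral_truncated_eq_sum {Ω : Type*} [MeasurableSpace Ω] (μ : Measure Ω) {Y : Ω → ℕ}
    (hY : Measurable Y) (M : ℕ) :
    ∫⁻ ω, (if Y ω ≤ M then (Y ω : ℝ≥0∞) else 0) ∂μ
      = ∑ k ∈ Finset.range (M + 1), k * μ {ω | Y ω = k} := by
  rw [← lintegral_map (f := fun k : ℕ ↦ if k ≤ M then (k : ℝ≥0∞) else 0) measurable_from_top hY,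
    lintegral_countable', tsum_eq_sum (s := Finset.range (M + 1))]
  · refine Finset.sum_congr rfl fun k hk ↦ ?_
    rw [if_pos (Nat.lt_succ_iff.1 (Finset.mem_range.1 hk)),
      Measure.map_apply hY (measurableSet_singleton k)]
    rfl
  · intro k hk
    rw [if_neg (by simpa [Nat.lt_succ_iff] using hk), zero_mul]

section

variable {Ω : Type*} [MeasurableSpace Ω] {μ : Measure Ω} {Y : Ω → ℕ}

theorem measure_eq_add_one_of_eq_one_div
    (hY : ∀ k, 1 ≤ k → μ {ω | Y ω = k} = 1 / ((k : ℝ≥0∞) * ((k : ℝ≥0∞) + 1))) (k : ℕ) :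
    μ {ω | Y ω = k + 1} = ENNReal.ofReal (1 / ((k + 1) * (k + 2))) := by
  rw [hY (k + 1) le_add_self,
    show ((k : ℝ) + 1) * (k + 2) = ((k + 1) * (k + 2) : ℕ) by push_cast; ring,
    ENNReal.ofReal_div_of_pos (by positivity), ENNReal.ofReal_one, ENNReal.ofReal_natCast]
  push_cast
  rw [add_assoc, one_add_one_eq_two]

theorem measure_lt_le_of_eq_one_div [IsProbabilityMeasure μ] (hYm : Measurable Y)
    (hY : ∀ k, 1 ≤ k → μ {ω | Y ω = k} = 1 / ((k : ℝ≥0∞) * ((k : ℝ≥0∞) + 1))) (M : ℕ) :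
    μ {ω | M < Y ω} ≤ ENNReal.ofReal (1 / (M + 1)) := by
  have hle : ENNReal.ofReal (1 - 1 / (M + 1)) ≤ μ (Y ⁻¹' Finset.range (M + 1)) := by
    rw [← sum_measure_preimage_singleton _ fun k _ ↦ hYm (measurableSet_singleton k),
      Finset.sum_range_succ', ← sum_range_one_div_succ_mul_succ_succ,
      ENNReal.ofReal_sum_of_nonneg fun k _ ↦ by positivity]
    exact le_add_right (Finset.sum_le_sum fun k _ ↦ (measure_eq_add_one_of_eq_one_div hY k).ge)
  have hcompl : {ω | M < Y ω} = (Y ⁻¹' Finset.range (M + 1))ᶜ := by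
    ext ω; simp
  rw [hcompl, prob_compl_eq_one_sub (hYm (Finset.measurableSet _))]
  calc 1 - μ (Y ⁻¹' Finset.range (M + 1)) ≤ 1 - ENNReal.ofReal (1 - 1 / (M + 1)) := by gcongr
    _ = ENNReal.ofReal (1 / (M + 1)) := by
      have : (1 : ℝ) / (M + 1) ≤ 1 := div_le_one_of_le₀ (by simp) (by positivity)
      rw [← ENNReal.ofReal_one, ← ENNReal.ofReal_sub _ (sub_nonneg.2 this), sub_sub_cancel]

theorem lintegral_truncated_eq_harmonic_of_eq_one_div (hYm : Measurable Y)
    (hY : ∀ k, 1 ≤ k → μ {ω | Y ω = k} = 1 / ((k : ℝ≥0∞) * ((k : ℝ≥0∞) + 1))) (M : ℕ) :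
    ∫⁻ ω, (if Y ω ≤ M then (Y ω : ℝ≥0∞) else 0) ∂μ
      = ENNReal.ofReal (harmonic (M + 1) - 1) := by
  rw [lintegral_truncated_eq_sum μ hYm, Finset.sum_range_succ', harmonic_succ_sub_one,
    ENNReal.ofReal_sum_of_nonneg fun k _ ↦ by positivity]
  simp only [Nat.cast_zero, zero_mul, add_zero]
  refine Finset.sum_congr rfl fun k _ ↦ ?_
  rw [measure_eq_add_one_of_eq_one_div hY, ← ENNReal.ofReal_natCast,
    ← ENNReal.ofReal_mul (by positivity)]
  congr 1
  push_cast
  field_simp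

theorem measure_le_sum_le_of_eq_one_div [IsProbabilityMeasure μ] {ι : Type*} {X : ι → Ω → ℕ}
    (hXm : ∀ i, Measurable (X i))
    (hX : ∀ i k, 1 ≤ k → μ {ω | X i ω = k} = 1 / ((k : ℝ≥0∞) * ((k : ℝ≥0∞) + 1)))
    (s : Finset ι) (M : ℕ) {y : ℝ} (hy : 0 < y) :
    μ {ω | y ≤ ∑ i ∈ s, (X i ω : ℝ)}
      ≤ ENNReal.ofReal (s.card * (1 / (M + 1)) + s.card * (harmonic (M + 1) - 1) / y) := by
  have hmean_nonneg : (0 : ℝ) ≤ harmonic (M + 1) - 1 := by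
    rw [harmonic_succ_sub_one]; positivity
  rw [ENNReal.ofReal_add (by positivity) (by positivity), ENNReal.ofReal_div_of_pos hy,
    ENNReal.ofReal_mul (by positivity), ENNReal.ofReal_mul (by positivity),
    ENNReal.ofReal_natCast]
  refine (measure_le_sum_le_tail_add_truncated μ hXm s M hy).trans ?_
  simp only [lintegral_truncated_eq_harmonic_of_eq_one_div (hXm _) (hX _), Finset.sum_const,
    nsmul_eq_mul]
  gcongr
  exact (Finset.sum_le_card_nsmul _ _ _ fun i _ ↦
    measure_lt_le_of_eq_one_div (hXm i) (hX i) M).trans (by simp)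

end

theorem sum_tail_bound_general
    {Ω : Type*} [MeasureSpace Ω] [IsProbabilityMeasure (ℙ : Measure Ω)]
    (X : ℕ → Ω → ℕ) (hmeas : ∀ i, Measurable (X i))
    (hdist : ∀ i k, 1 ≤ k →
      ℙ {ω | X i ω = k} = 1 / ((k : ℝ≥0∞) * ((k : ℝ≥0∞) + 1))) :
    ∀ (C ε : ℝ), 0 < C → 0 < ε → ∀ j : ℕ, 1 ≤ j →
      ℙ {ω | C * (j : ℝ) ^ (1 + ε) ≤ ∑ i ∈ Finset.range j, (X i ω : ℝ)}
        ≤ ENNReal.ofReal ((j : ℝ) ^ (-ε) * (1 + C⁻¹ * (1 + ε) * Real.log j)) := by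
  intro C ε hC hε j hj
  have hj0 : (0 : ℝ) < j := by exact_mod_cast hj
  set y := C * (j : ℝ) ^ (1 + ε)
  rcases le_or_gt y 1 with hy1 | hy1
  · exact prob_le_one.trans
      (ENNReal.one_le_ofReal.2 (one_le_rpow_neg_mul hC hε.le (by exact_mod_cast hj) hy1))
  have hy0 : 0 < y := one_pos.trans hy1
  set M := ⌊y⌋₊
  have hM : 1 ≤ M := Nat.le_floor (by exact_mod_cast hy1.le)
  refine (measure_le_sum_le_of_eq_one_div hmeas hdist (Finset.range j) M hy0).trans
    (ENNReal.ofReal_le_ofReal ?_)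
  rw [Finset.card_range]
  calc j * (1 / (M + 1)) + j * (harmonic (M + 1) - 1) / y
      = j * (y / (M + 1) + (harmonic (M + 1) - 1)) / y := by field_simp
    _ ≤ j * (1 + Real.log y) / y := by
        gcongr j * ?_ / _
        linarith [div_add_harmonic_le_two_add_log hM (Nat.floor_le hy0.le)
          (Nat.lt_floor_add_one y).le]
    _ ≤ _ := mul_one_add_log_div_le hC hj0

/-- For i.i.d. positive-integer random variables with
`P(X i = k) = 1/(k(k+1))`, the tail bound
`P(∑_{i=1}^j X_i ≥ C j^{1+ε}) ≤ j^{-ε}(1 + C⁻¹(1+ε) log j)` holds. -/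
theorem sum_tail_bound
    {Ω : Type*} [MeasureSpace Ω] [IsProbabilityMeasure (ℙ : Measure Ω)]
    (X : ℕ → Ω → ℕ) (hmeas : ∀ i, Measurable (X i))
    (hpos : ∀ i ω, 1 ≤ X i ω)
    (hindep : iIndepFun X ℙ)
    (hdist : ∀ i k, 1 ≤ k →
      ℙ {ω | X i ω = k} = 1 / ((k : ℝ≥0∞) * ((k : ℝ≥0∞) + 1))) :
    ∀ (C ε : ℝ), 0 < C → 0 < ε → ∀ j : ℕ, 1 ≤ j →
      ℙ {ω | C * (j : ℝ) ^ (1 + ε) ≤ ∑ i ∈ Finset.range j, (X i ω : ℝ)}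
        ≤ ENNReal.ofReal ((j : ℝ) ^ (-ε) * (1 + C⁻¹ * (1 + ε) * Real.log j)) :=
  sum_tail_bound_general X hmeas hdist
end

section
/- If X_1, X_2, ... are i.i.d. positive-integer-valued random variables with P(X_i = k) = 1/(k(k+1)) for k ≥ 1, then almost surely lim_{j→∞} log(∑_{i=1}^j X_i) / log j = 1. -/
/-!
Each `X i` has tail `P(X i ≥ m) = 1/m`, so its mean is infinite while `E[min(X i, 2^r)] ≤ r + 1`.
For the partial sums `S j` the lower bound `S j ≥ j` is immediate. For the upper bound, truncate
the first `2^k` summands at level `4^k`: a union bound controls the summands above that level and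
Markov's inequality the truncated sum, so `S (2^k) ≥ 2^k (k+1)^4` has probability at most
`2^-k + (k+1)^-2`. By Borel–Cantelli and monotonicity of `S`, almost surely `S j ≤ j^(1+δ)`
eventually, for every `δ > 0`.
-/

open MeasureTheory ProbabilityTheory Filter Finset
open scoped ENNReal

theorem ENNReal.inv_natCast_mul_add_one_add_inv (m : ℕ) (hm : m ≠ 0) :
    ((m : ℝ≥0∞) * (m + 1))⁻¹ + ((m : ℝ≥0∞) + 1)⁻¹ = (m : ℝ≥0∞)⁻¹ := by
  have hm0 : (m : ℝ≥0∞) ≠ 0 := by exact_mod_cast hm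
  have hmt : (m : ℝ≥0∞) ≠ ∞ := ENNReal.natCast_ne_top m
  calc ((m : ℝ≥0∞) * (m + 1))⁻¹ + ((m : ℝ≥0∞) + 1)⁻¹
      = (m : ℝ≥0∞)⁻¹ * (((m : ℝ≥0∞) + 1) * ((m : ℝ≥0∞) + 1)⁻¹) := by
        rw [ENNReal.mul_inv (.inl hm0) (.inl hmt), ← mul_assoc, mul_add, mul_one,
          ENNReal.inv_mul_cancel hm0 hmt, add_mul, one_mul, add_comm]
    _ = (m : ℝ≥0∞)⁻¹ := by rw [ENNReal.mul_inv_cancel (by simp) (by simp), mul_one]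

theorem ENNReal.sum_Ioc_inv_le (r : ℕ) : ∑ m ∈ Ioc (0 : ℕ) (2 ^ r), (m : ℝ≥0∞)⁻¹ ≤ r + 1 := by
  induction r with
  | zero => rw [pow_zero, ← zero_add 1, Nat.Ioc_succ_singleton]; simp
  | succ r ih =>
    have hblock : ∑ m ∈ Ioc (2 ^ r : ℕ) (2 ^ (r + 1)), (m : ℝ≥0∞)⁻¹ ≤ 1 :=
      calc ∑ m ∈ Ioc (2 ^ r : ℕ) (2 ^ (r + 1)), (m : ℝ≥0∞)⁻¹
          ≤ ∑ _m ∈ Ioc (2 ^ r : ℕ) (2 ^ (r + 1)), ((2 ^ r : ℕ) : ℝ≥0∞)⁻¹ :=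
            sum_le_sum fun m hm => by gcongr; exact (mem_Ioc.1 hm).1.le
        _ = 1 := by
            rw [sum_const, Nat.card_Ioc, pow_succ, mul_two, Nat.add_sub_cancel, nsmul_eq_mul,
              ENNReal.mul_inv_cancel (by simp) (by simp)]
    rw [← sum_Ioc_consecutive _ (Nat.zero_le _) (Nat.pow_le_pow_right two_pos r.le_succ)]
    push_cast
    exact add_le_add ih hblock

theorem ENNReal.tsum_inv_add_one_sq_ne_top : ∑' k : ℕ, (((k : ℝ≥0∞) + 1) ^ 2)⁻¹ ≠ ∞ := by
  have hcoe : ∀ k : ℕ, (((k : ℝ≥0∞) + 1) ^ 2)⁻¹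
      = (((((k + 1 : ℕ) : NNReal) ^ 2)⁻¹ : NNReal) : ℝ≥0∞) := by
    intro k; rw [ENNReal.coe_inv (by positivity)]; push_cast; rfl
  simp_rw [hcoe]
  rw [ENNReal.tsum_coe_ne_top_iff_summable, ← NNReal.summable_coe]
  refine ((summable_nat_add_iff 1).2 ((Real.summable_nat_pow_inv (p := 2)).2 (by norm_num))).congr
    fun k => ?_
  push_cast
  rfl

section Probability

variable {Ω : Type*} [MeasurableSpace Ω] {μ : Measure Ω}

theorem measure_le_eq_inv_of_measure_eq [IsProbabilityMeasure μ] {Y : Ω → ℕ}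
    (hY : Measurable Y) (hpos : ∀ ω, 1 ≤ Y ω)
    (hdist : ∀ k, 1 ≤ k → μ {ω | Y ω = k} = 1 / ((k : ℝ≥0∞) * ((k : ℝ≥0∞) + 1)))
    {m : ℕ} (hm : 1 ≤ m) : μ {ω | m ≤ Y ω} = (m : ℝ≥0∞)⁻¹ := by
  induction m, hm using Nat.le_induction with
  | base => simp [hpos]
  | succ m hm ih =>
    have hsplit : {ω | m ≤ Y ω} = {ω | Y ω = m} ∪ {ω | m + 1 ≤ Y ω} := by
      ext ω; simp only [Set.mem_ofPred_eq, Set.mem_union]; omega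
    have hdisj : Disjoint {ω | Y ω = m} {ω | m + 1 ≤ Y ω} :=
      Set.disjoint_left.2 fun ω h1 h2 => by simp only [Set.mem_ofPred_eq] at h1 h2; omega
    rw [hsplit, measure_union hdisj (hY measurableSet_Ici), hdist m hm, one_div,
      ← ENNReal.inv_natCast_mul_add_one_add_inv m (by omega)] at ih
    push_cast
    exact (ENNReal.add_right_inj (by simp; omega)).1 ih

theorem lintegral_min_eq_sum_measure_le {Y : Ω → ℕ} (hY : Measurable Y) (M : ℕ) :
    ∫⁻ ω, (min (Y ω) M : ℕ) ∂μ = ∑ m ∈ Ioc 0 M, μ {ω | m ≤ Y ω} := by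
  have hlayer : ∀ ω, ((min (Y ω) M : ℕ) : ℝ≥0∞)
      = ∑ m ∈ Ioc 0 M, {ω | m ≤ Y ω}.indicator 1 ω := by
    intro ω
    have hfilter : {m ∈ Ioc 0 M | m ≤ Y ω} = Ioc 0 (min (Y ω) M) := by
      ext m; simp only [mem_filter, mem_Ioc]; omega
    simp only [Set.indicator_apply, Set.mem_ofPred_eq, Pi.one_apply, sum_boole, hfilter,
      Nat.card_Ioc, Nat.sub_zero]
  have hmeas : ∀ m, MeasurableSet {ω | m ≤ Y ω} := fun m => hY measurableSet_Ici
  simp_rw [hlayer]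
  rw [lintegral_finsetSum _ fun m _ => measurable_one.indicator (hmeas m)]
  simp_rw [lintegral_indicator_one (hmeas _)]

theorem lintegral_min_two_pow_le {Y : Ω → ℕ} (hY : Measurable Y)
    (htail : ∀ m, 1 ≤ m → μ {ω | m ≤ Y ω} ≤ (m : ℝ≥0∞)⁻¹) (r : ℕ) :
    ∫⁻ ω, (min (Y ω) (2 ^ r) : ℕ) ∂μ ≤ r + 1 :=
  calc ∫⁻ ω, (min (Y ω) (2 ^ r) : ℕ) ∂μ = ∑ m ∈ Ioc 0 (2 ^ r), μ {ω | m ≤ Y ω} :=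
        lintegral_min_eq_sum_measure_le hY _
    _ ≤ ∑ m ∈ Ioc (0 : ℕ) (2 ^ r), (m : ℝ≥0∞)⁻¹ := sum_le_sum fun m hm => htail m (mem_Ioc.1 hm).1
    _ ≤ r + 1 := ENNReal.sum_Ioc_inv_le r

variable {X : ℕ → Ω → ℕ}

theorem measure_le_sum_range_min_le (hX : ∀ i, Measurable (X i))
    (htail : ∀ i m, 1 ≤ m → μ {ω | m ≤ X i ω} ≤ (m : ℝ≥0∞)⁻¹) {n b : ℕ} (hn : n ≠ 0) (hb : b ≠ 0)
    (r : ℕ) :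
    μ {ω | ((n * (r + 1) * b : ℕ) : ℝ≥0∞) ≤ ∑ i ∈ range n, ((min (X i ω) (2 ^ r) : ℕ) : ℝ≥0∞)} ≤
      (b : ℝ≥0∞)⁻¹ := by
  have hmin : ∀ i, Measurable fun ω => ((min (X i ω) (2 ^ r) : ℕ) : ℝ≥0∞) :=
    fun i => (measurable_of_countable fun a : ℕ => ((min a (2 ^ r) : ℕ) : ℝ≥0∞)).comp (hX i)
  have hmean : ∫⁻ ω, ∑ i ∈ range n, ((min (X i ω) (2 ^ r) : ℕ) : ℝ≥0∞) ∂μ ≤ n * (r + 1) :=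
    calc ∫⁻ ω, ∑ i ∈ range n, ((min (X i ω) (2 ^ r) : ℕ) : ℝ≥0∞) ∂μ
        = ∑ i ∈ range n, ∫⁻ ω, ((min (X i ω) (2 ^ r) : ℕ) : ℝ≥0∞) ∂μ :=
          lintegral_finsetSum _ fun i _ => hmin i
      _ ≤ ∑ _i ∈ range n, ((r : ℝ≥0∞) + 1) :=
          sum_le_sum fun i _ => lintegral_min_two_pow_le (hX i) (htail i) r
      _ = n * (r + 1) := by rw [sum_const, card_range, nsmul_eq_mul]
  have hnr : (n : ℝ≥0∞) * (r + 1) ≠ 0 := by simp [hn]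
  have hnr' : (n : ℝ≥0∞) * (r + 1) ≠ ∞ := by simp [ENNReal.mul_eq_top]
  calc _ ≤ (∫⁻ ω, ∑ i ∈ range n, ((min (X i ω) (2 ^ r) : ℕ) : ℝ≥0∞) ∂μ) / (n * (r + 1) * b : ℕ) :=
        meas_ge_le_lintegral_div (Finset.measurable_sum _ fun i _ => hmin i).aemeasurable
          (by simp [hn, hb]) (ENNReal.natCast_ne_top _)
    _ ≤ (n * (r + 1) * 1) / (n * (r + 1) * b) := by push_cast; rw [mul_one]; gcongr
    _ = (b : ℝ≥0∞)⁻¹ := by rw [ENNReal.mul_div_mul_left _ _ hnr hnr', one_div]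

theorem measure_le_sum_range_le (hX : ∀ i, Measurable (X i))
    (htail : ∀ i m, 1 ≤ m → μ {ω | m ≤ X i ω} ≤ (m : ℝ≥0∞)⁻¹) {n b : ℕ} (hn : n ≠ 0) (hb : b ≠ 0)
    (r : ℕ) :
    μ {ω | n * (r + 1) * b ≤ ∑ i ∈ range n, X i ω} ≤ n * (2 ^ r)⁻¹ + (b : ℝ≥0∞)⁻¹ := by
  set big := ⋃ i ∈ range n, {ω | 2 ^ r + 1 ≤ X i ω}
  have hbig : μ big ≤ n * (2 ^ r)⁻¹ :=
    calc μ big ≤ ∑ i ∈ range n, μ {ω | 2 ^ r + 1 ≤ X i ω} := measure_biUnion_finset_le _ _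
      _ ≤ ∑ _i ∈ range n, ((2 : ℝ≥0∞) ^ r)⁻¹ := sum_le_sum fun i _ =>
          (htail i _ le_add_self).trans (by gcongr; push_cast; exact le_self_add)
      _ = n * (2 ^ r)⁻¹ := by rw [sum_const, card_range, nsmul_eq_mul]
  have hsub : {ω | n * (r + 1) * b ≤ ∑ i ∈ range n, X i ω} ⊆
      big ∪ {ω | ((n * (r + 1) * b : ℕ) : ℝ≥0∞) ≤
        ∑ i ∈ range n, ((min (X i ω) (2 ^ r) : ℕ) : ℝ≥0∞)} := by
    intro ω hω
    by_cases hω' : ω ∈ big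
    · exact .inl hω'
    · refine .inr ?_
      simp only [big, Set.mem_iUnion, Set.mem_ofPred_eq, not_exists, not_le] at hω'
      have htrunc : ∀ i ∈ range n, min (X i ω) (2 ^ r) = X i ω :=
        fun i hi => min_eq_left (Nat.lt_succ_iff.1 (hω' i hi))
      rw [Set.mem_ofPred_eq, ← Nat.cast_sum, sum_congr rfl htrunc]
      exact_mod_cast hω
  calc _ ≤ μ big + μ _ := (measure_mono hsub).trans (measure_union_le _ _)
    _ ≤ _ := add_le_add hbig (measure_le_sum_range_min_le hX htail hn hb r)

theorem ae_eventually_sum_range_two_pow_lt (hX : ∀ i, Measurable (X i))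
    (htail : ∀ i m, 1 ≤ m → μ {ω | m ≤ X i ω} ≤ (m : ℝ≥0∞)⁻¹) :
    ∀ᵐ ω ∂μ, ∀ᶠ k in atTop, ∑ i ∈ range (2 ^ k), X i ω < 2 ^ k * (k + 1) ^ 4 := by
  have hbound : ∀ k : ℕ, μ {ω | 2 ^ k * (k + 1) ^ 4 ≤ ∑ i ∈ range (2 ^ k), X i ω} ≤
      2⁻¹ ^ k + (((k : ℝ≥0∞) + 1) ^ 2)⁻¹ := by
    intro k
    have hpoly : 2 ^ k * (2 * k + 1) * (k + 1) ^ 2 ≤ 2 ^ k * (k + 1) ^ 4 := by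
      have hlin : 2 * k + 1 ≤ (k + 1) ^ 2 := by nlinarith
      calc 2 ^ k * (2 * k + 1) * (k + 1) ^ 2 ≤ 2 ^ k * (k + 1) ^ 2 * (k + 1) ^ 2 := by gcongr
        _ = 2 ^ k * (k + 1) ^ 4 := by ring
    calc _ ≤ μ {ω | 2 ^ k * (2 * k + 1) * (k + 1) ^ 2 ≤ ∑ i ∈ range (2 ^ k), X i ω} :=
          measure_mono fun ω hω => hpoly.trans hω
      _ ≤ ((2 ^ k : ℕ) : ℝ≥0∞) * (2 ^ (2 * k))⁻¹ + (((k + 1) ^ 2 : ℕ) : ℝ≥0∞)⁻¹ :=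
          measure_le_sum_range_le hX htail (by positivity) (by positivity) (2 * k)
      _ = 2⁻¹ ^ k + (((k : ℝ≥0∞) + 1) ^ 2)⁻¹ := by
          rw [two_mul, pow_add, ENNReal.mul_inv (by simp) (by simp), ← mul_assoc]
          push_cast
          rw [ENNReal.mul_inv_cancel (by simp) (by simp), one_mul, ENNReal.inv_pow]
  have hsum : ∑' k : ℕ, (2⁻¹ ^ k + (((k : ℝ≥0∞) + 1) ^ 2)⁻¹) ≠ ∞ := by
    rw [ENNReal.tsum_add, ENNReal.tsum_geometric, ENNReal.one_sub_inv_two, inv_inv]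
    exact ENNReal.add_ne_top.2 ⟨ENNReal.ofNat_ne_top, ENNReal.tsum_inv_add_one_sq_ne_top⟩
  filter_upwards [ae_eventually_notMem (ne_top_of_le_ne_top hsum (ENNReal.tsum_le_tsum hbound))]
    with ω hω
  simpa only [Set.mem_ofPred_eq, not_le] using hω

end Probability

theorem eventually_two_mul_add_two_pow_le_pow (c : ℕ) {r : ℝ} (hr : 1 < r) :
    ∀ᶠ k : ℕ in atTop, 2 * ((k : ℝ) + 2) ^ c ≤ r ^ k := by
  have hr0 : 0 < r := one_pos.trans hr
  have hlim := (tendsto_pow_const_div_const_pow_of_one_lt c hr).comp (tendsto_add_atTop_nat 2)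
  filter_upwards [hlim.eventually (ge_mem_nhds (by positivity : 0 < (2 * r ^ 2)⁻¹))] with k hk
  rw [Function.comp_apply, div_le_iff₀ (by positivity)] at hk
  push_cast at hk
  calc 2 * ((k : ℝ) + 2) ^ c ≤ 2 * ((2 * r ^ 2)⁻¹ * r ^ (k + 2)) := by gcongr
    _ = r ^ k := by field_simp; ring

theorem eventually_le_rpow_of_le_two_pow_mul {s : ℕ → ℝ} (hs : Monotone s) {c : ℕ}
    (h : ∀ᶠ k : ℕ in atTop, s (2 ^ k) ≤ 2 ^ k * ((k : ℝ) + 1) ^ c) {δ : ℝ} (hδ : 0 < δ) :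
    ∀ᶠ j : ℕ in atTop, s j ≤ (j : ℝ) ^ (1 + δ) := by
  have hdyadic : ∀ᶠ k : ℕ in atTop, s (2 ^ (k + 1)) ≤ ((2 : ℝ) ^ k) ^ (1 + δ) := by
    filter_upwards [(tendsto_add_atTop_nat 1).eventually h,
      eventually_two_mul_add_two_pow_le_pow c (Real.one_lt_rpow one_lt_two hδ)] with k hk hpoly
    calc s (2 ^ (k + 1)) ≤ 2 ^ (k + 1) * (((k + 1 : ℕ) : ℝ) + 1) ^ c := hk
      _ = 2 ^ k * (2 * ((k : ℝ) + 2) ^ c) := by push_cast; ring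
      _ ≤ 2 ^ k * ((2 : ℝ) ^ δ) ^ k := by gcongr
      _ = ((2 : ℝ) ^ k) ^ (1 + δ) := by
          rw [Real.rpow_add (by positivity), Real.rpow_one, ← Real.rpow_mul_natCast zero_le_two,
            ← Real.rpow_natCast_mul zero_le_two, mul_comm (k : ℝ) δ]
  have hlog : Tendsto (Nat.log 2) atTop atTop :=
    tendsto_atTop_atTop.2 fun k => ⟨2 ^ k, fun j hj => Nat.le_log_of_pow_le one_lt_two hj⟩
  filter_upwards [hlog.eventually hdyadic, eventually_ne_atTop 0] with j hj hj0
  calc s j ≤ s (2 ^ (Nat.log 2 j + 1)) := hs (Nat.lt_pow_succ_log_self one_lt_two j).le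
    _ ≤ ((2 : ℝ) ^ Nat.log 2 j) ^ (1 + δ) := hj
    _ ≤ (j : ℝ) ^ (1 + δ) := by
        gcongr
        exact_mod_cast Nat.pow_log_le_self 2 hj0

theorem tendsto_log_div_log_of_le_rpow {s : ℕ → ℝ} (hlow : ∀ j : ℕ, (j : ℝ) ≤ s j)
    (hup : ∀ δ : ℝ, 0 < δ → ∀ᶠ j : ℕ in atTop, s j ≤ (j : ℝ) ^ (1 + δ)) :
    Tendsto (fun j : ℕ => Real.log (s j) / Real.log j) atTop (nhds 1) := by
  refine tendsto_order.2 ⟨fun a ha => ?_, fun b hb => ?_⟩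
  · filter_upwards [eventually_ge_atTop 2] with j hj
    have hj1 : (1 : ℝ) < j := by exact_mod_cast hj
    exact ha.trans_le ((one_le_div (Real.log_pos hj1)).2 (Real.log_le_log (by linarith) (hlow j)))
  · filter_upwards [eventually_ge_atTop 2, hup ((b - 1) / 2) (by linarith)] with j hj hsj
    have hj1 : (1 : ℝ) < j := by exact_mod_cast hj
    have hlogj := Real.log_pos hj1
    have hlogs : Real.log (s j) ≤ (1 + (b - 1) / 2) * Real.log j :=
      calc Real.log (s j) ≤ Real.log ((j : ℝ) ^ (1 + (b - 1) / 2)) :=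
            Real.log_le_log (by linarith [hlow j]) hsj
        _ = (1 + (b - 1) / 2) * Real.log j := Real.log_rpow (by linarith) _
    rw [div_lt_iff₀ hlogj]
    nlinarith

theorem sum_log_asymptotics_general
    {Ω : Type*} [MeasureSpace Ω] [IsProbabilityMeasure (ℙ : Measure Ω)]
    (X : ℕ → Ω → ℕ) (hmeas : ∀ i, Measurable (X i))
    (hpos : ∀ i ω, 1 ≤ X i ω)
    (hdist : ∀ i k, 1 ≤ k →
      ℙ {ω | X i ω = k} = 1 / ((k : ℝ≥0∞) * ((k : ℝ≥0∞) + 1))) :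
    ∀ᵐ ω ∂(ℙ : Measure Ω),
      Filter.Tendsto
        (fun j : ℕ => Real.log (∑ i ∈ Finset.range j, (X i ω : ℝ)) / Real.log j)
        Filter.atTop (nhds 1) := by
  have htail : ∀ i m, 1 ≤ m → ℙ {ω | m ≤ X i ω} ≤ (m : ℝ≥0∞)⁻¹ := fun i m hm =>
    (measure_le_eq_inv_of_measure_eq (hmeas i) (hpos i) (hdist i) hm).le
  filter_upwards [ae_eventually_sum_range_two_pow_lt hmeas htail] with ω hω
  have hmono : Monotone fun j => ∑ i ∈ range j, (X i ω : ℝ) := fun a b hab =>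
    sum_le_sum_of_subset_of_nonneg (range_subset_range.2 hab) fun _ _ _ => by positivity
  have hlow : ∀ j : ℕ, (j : ℝ) ≤ ∑ i ∈ range j, (X i ω : ℝ) := fun j => by
    simpa using card_nsmul_le_sum (range j) (fun i => (X i ω : ℝ)) 1 fun i _ => by
      exact_mod_cast hpos i ω
  have hdyadic :
      ∀ᶠ k : ℕ in atTop, ∑ i ∈ range (2 ^ k), (X i ω : ℝ) ≤ 2 ^ k * ((k : ℝ) + 1) ^ 4 :=
    hω.mono fun k hk => by exact_mod_cast hk.le
  exact tendsto_log_div_log_of_le_rpow hlow fun δ hδ =>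
    eventually_le_rpow_of_le_two_pow_mul hmono hdyadic hδ

/-- For i.i.d. positive-integer random variables with
`P(X i = k) = 1/(k(k+1))`, almost surely `log(∑_{i=1}^j X_i)/log j → 1`. -/
theorem sum_log_asymptotics
    {Ω : Type*} [MeasureSpace Ω] [IsProbabilityMeasure (ℙ : Measure Ω)]
    (X : ℕ → Ω → ℕ) (hmeas : ∀ i, Measurable (X i))
    (hpos : ∀ i ω, 1 ≤ X i ω)
    (hindep : iIndepFun X ℙ)
    (hdist : ∀ i k, 1 ≤ k →
      ℙ {ω | X i ω = k} = 1 / ((k : ℝ≥0∞) * ((k : ℝ≥0∞) + 1))) :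
    ∀ᵐ ω ∂(ℙ : Measure Ω),
      Filter.Tendsto
        (fun j : ℕ => Real.log (∑ i ∈ Finset.range j, (X i ω : ℝ)) / Real.log j)
        Filter.atTop (nhds 1) :=
  sum_log_asymptotics_general X hmeas hpos hdist
end

section
/- For positive integers k and s with k ≤ s−1, the following combinatorial identity holds: ∑ over (x_1 < x_2 < ... < x_k) in {1,...,s−1} of [ ∏_{i=1}^{k−1} 1/(x_{i+1}−x_i) · s/(x_1(s−x_k)) ] = (k+1) ∑ over positive integers a_1,...,a_k with a_1+...+a_k ≤ s−1 of 1/(a_1 a_2 ... a_k). -/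
/-!
Put `x₀ = 0` and `x_{k+1} = s`. The summand attached to `x₁ < ⋯ < x_k` is `s / ∏ aᵢ`, where
`aᵢ = x_{i+1} - xᵢ` are the gaps; these form a composition of `s` into `k + 1` positive parts, and
taking partial sums inverts this, so the left side is `∑ s / (a₁ ⋯ a_{k+1})` over such
compositions. Expanding `s = a₁ + ⋯ + a_{k+1}` gives `s / ∏ aᵢ = ∑ⱼ 1 / ∏_{i ≠ j} aᵢ`, and for
each of the `k + 1` choices of `j`, deleting the `j`-th part is a bijection onto the positive
`k`-tuples with sum at most `s - 1`.
-/

/-- Product of reciprocals of consecutive differences of a list: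
for `[x₁, x₂, …, x_k]` this is `∏_{i=1}^{k-1} 1/(x_{i+1} - x_i)`. -/
noncomputable def diffProd : List ℕ → ℝ
  | [] => 1
  | [_] => 1
  | x :: y :: l => (1 / ((y : ℝ) - (x : ℝ))) * diffProd (y :: l)

open Finset

theorem diffProd_cons (a : ℕ) : ∀ {l : List ℕ} (h : l ≠ []),
    diffProd (a :: l) = 1 / ((l.head h : ℝ) - a) * diffProd l
  | _ :: _, _ => rfl

theorem diffProd_append_singleton (b : ℕ) : ∀ {l : List ℕ} (h : l ≠ []),
    diffProd (l ++ [b]) = diffProd l * (1 / ((b : ℝ) - l.getLast h))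
  | [_], _ => by simp [diffProd]
  | x :: y :: t, _ => by
    rw [List.cons_append, List.cons_append, diffProd, ← List.cons_append,
      diffProd_append_singleton b (List.cons_ne_nil y t), diffProd, mul_assoc,
      List.getLast_cons_cons]

theorem diffProd_ofFn {n : ℕ} (f : Fin (n + 1) → ℕ) :
    diffProd (List.ofFn f) = ∏ i : Fin n, 1 / ((f i.succ : ℝ) - f i.castSucc) := by
  induction n with
  | zero => rfl
  | succ n ih =>
    rw [List.ofFn_succ, List.ofFn_succ, diffProd, ← List.ofFn_succ (f := fun i => f i.succ),
      ih, Fin.prod_univ_succ]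
    rfl

theorem weight_eq_diffProd (s : ℕ) {l : List ℕ} (h : l ≠ []) :
    1 / (l.head! : ℝ) * diffProd l * ((s : ℝ) / ((s : ℝ) - l.getLast!))
      = s * diffProd (0 :: l ++ [s]) := by
  obtain ⟨x, t, rfl⟩ := List.exists_cons_of_ne_nil h
  rw [diffProd_append_singleton s (List.cons_ne_nil 0 _), List.getLast_cons h,
    diffProd_cons 0 h]
  simp only [List.head!_cons, List.head_cons, List.getLast!_eq_getLast?_getD,
    List.getLast?_eq_some_getLast h, Option.getD_some, Nat.cast_zero, sub_zero]
  ring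

theorem partialSum_last {M : Type*} [AddCommMonoid M] {n : ℕ} (a : Fin n → M) :
    Fin.partialSum a (Fin.last n) = ∑ i, a i := by
  rw [Fin.partialSum, Fin.val_last, List.take_of_length_le (by simp), List.sum_ofFn]

theorem strictMono_partialSum {M : Type*} [AddMonoid M] [Preorder M] [AddLeftStrictMono M]
    {n : ℕ} {a : Fin n → M} (ha : ∀ i, 0 < a i) : StrictMono (Fin.partialSum a) :=
  Fin.strictMono_iff_lt_succ.2 fun i => by
    rw [Fin.partialSum_succ]
    exact lt_add_of_pos_right _ (ha i)

def gaps {n : ℕ} (y : Fin (n + 1) → ℕ) : Fin n → ℕ := fun i => y i.succ - y i.castSucc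

theorem gaps_partialSum {n : ℕ} (a : Fin n → ℕ) : gaps (Fin.partialSum a) = a := by
  ext i; simp [gaps, Fin.partialSum_succ]

theorem partialSum_gaps {n : ℕ} {y : Fin (n + 1) → ℕ} (hy : Monotone y) (i : Fin (n + 1)) :
    Fin.partialSum (gaps y) i = y i - y 0 := by
  induction i using Fin.induction with
  | zero => simp
  | succ i ih =>
    have := hy (Fin.castSucc_le_succ i)
    have := hy (Fin.zero_le i.castSucc)
    rw [Fin.partialSum_succ, ih, gaps]
    omega

def extendEnds {k : ℕ} (s : ℕ) (x : Fin k → ℕ) : Fin (k + 2) → ℕ := Fin.cons 0 (Fin.snoc x s)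

theorem extendEnds_interior {k s : ℕ} {y : Fin (k + 2) → ℕ} (h0 : y 0 = 0)
    (hs : y (Fin.last _) = s) :
    extendEnds s (fun j => y j.castSucc.succ) = y := by
  ext i
  induction i using Fin.cases with
  | zero => simp [extendEnds, h0]
  | succ i =>
    induction i using Fin.lastCases with
    | last => simp [extendEnds, ← hs]
    | cast j => simp [extendEnds]

theorem ofFn_extendEnds {k : ℕ} (s : ℕ) (x : Fin k → ℕ) :
    List.ofFn (extendEnds s x) = 0 :: List.ofFn x ++ [s] := by
  rw [extendEnds, List.ofFn_succ, List.ofFn_succ']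
  simp

theorem diffProd_ofFn_partialSum {n : ℕ} (a : Fin n → ℕ) :
    diffProd (List.ofFn (Fin.partialSum a)) = ∏ i, 1 / (a i : ℝ) := by
  rw [diffProd_ofFn]
  simp [Fin.partialSum_succ]

def posAntidiagonalTuple (n s : ℕ) : Finset (Fin n → ℕ) :=
  (Finset.Nat.antidiagonalTuple n s).filter fun a => ∀ i, 0 < a i

theorem mem_posAntidiagonalTuple {n s : ℕ} {a : Fin n → ℕ} :
    a ∈ posAntidiagonalTuple n s ↔ ∑ i, a i = s ∧ ∀ i, 0 < a i := by
  simp [posAntidiagonalTuple, Finset.Nat.mem_antidiagonalTuple]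

/-- For a composition `a` of `s`, the partial sums strictly between `0` and `s`. -/
def cutPoints {k : ℕ} (a : Fin (k + 1) → ℕ) : Finset ℕ :=
  univ.image fun j : Fin k => Fin.partialSum a j.castSucc.succ

section CutPoints

variable {k s : ℕ} {a : Fin (k + 1) → ℕ}

theorem strictMono_interior_partialSum (ha : ∀ i, 0 < a i) :
    StrictMono fun j : Fin k => Fin.partialSum a j.castSucc.succ :=
  (strictMono_partialSum ha).comp (Fin.strictMono_succ.comp Fin.strictMono_castSucc)

theorem card_cutPoints (ha : ∀ i, 0 < a i) : (cutPoints a).card = k := by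
  rw [cutPoints, card_image_of_injective _ (strictMono_interior_partialSum ha).injective,
    card_univ, Fintype.card_fin]

theorem cutPoints_mem_powersetCard (ha : a ∈ posAntidiagonalTuple (k + 1) s) :
    cutPoints a ∈ powersetCard k (Icc 1 (s - 1)) := by
  obtain ⟨hsum, hpos⟩ := mem_posAntidiagonalTuple.1 ha
  refine mem_powersetCard.2 ⟨fun x hx => ?_, card_cutPoints hpos⟩
  obtain ⟨j, -, rfl⟩ := mem_image.1 hx
  have h0 := strictMono_partialSum hpos (Fin.succ_pos j.castSucc)
  have hs := strictMono_partialSum hpos (Fin.succ_lt_succ_iff.2 (Fin.castSucc_lt_last j))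
  rw [Fin.partialSum_zero] at h0
  rw [Fin.succ_last, partialSum_last, hsum] at hs
  exact mem_Icc.2 ⟨h0, by omega⟩

theorem sort_cutPoints (ha : ∀ i, 0 < a i) :
    (cutPoints a).sort = List.ofFn fun j : Fin k => Fin.partialSum a j.castSucc.succ := by
  rw [← listMap_orderEmbOfFin_finRange _ (card_cutPoints ha), ← List.ofFn_eq_map,
    ← orderEmbOfFin_unique (card_cutPoints ha)
      (fun j => mem_image_of_mem _ (mem_univ j)) (strictMono_interior_partialSum ha)]

theorem extendEnds_interior_partialSum (ha : a ∈ posAntidiagonalTuple (k + 1) s) :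
    extendEnds s (fun j : Fin k => Fin.partialSum a j.castSucc.succ) = Fin.partialSum a :=
  extendEnds_interior (Fin.partialSum_zero a)
    ((partialSum_last a).trans (mem_posAntidiagonalTuple.1 ha).1)

end CutPoints

section ExtendEnds

variable {k s : ℕ} {x : Fin k → ℕ}

theorem strictMono_extendEnds (hx : StrictMono x) (hpos : ∀ j, 0 < x j) (hlt : ∀ j, x j < s)
    (hs : 0 < s) : StrictMono (extendEnds s x) := by
  refine Fin.strictMono_cons.2 ⟨fun j => ?_, ?_⟩
  · induction j using Fin.lastCases <;> simp [hpos, hs]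
  · rw [← Fin.insertNth_last', Fin.strictMono_insertNth_iff]
    simp [hx, hlt]

theorem gaps_extendEnds_mem (hy : StrictMono (extendEnds s x)) :
    gaps (extendEnds s x) ∈ posAntidiagonalTuple (k + 1) s := by
  refine mem_posAntidiagonalTuple.2 ⟨?_, fun i => Nat.sub_pos_of_lt (hy Fin.castSucc_lt_succ)⟩
  rw [← partialSum_last, partialSum_gaps hy.monotone]
  simp [extendEnds]

theorem cutPoints_gaps_extendEnds (hy : Monotone (extendEnds s x)) :
    cutPoints (gaps (extendEnds s x)) = univ.image x := by
  simp only [cutPoints, partialSum_gaps hy]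
  simp [extendEnds]

end ExtendEnds

theorem sum_powersetCard_Icc_eq_sum_cutPoints {M : Type*} [AddCommMonoid M] {k s : ℕ}
    (hs : 0 < s) (f : Finset ℕ → M) :
    ∑ A ∈ powersetCard k (Icc 1 (s - 1)), f A
      = ∑ a ∈ posAntidiagonalTuple (k + 1) s, f (cutPoints a) := by
  symm
  refine sum_nbij cutPoints (fun a ha => cutPoints_mem_powersetCard ha) ?_ ?_ fun _ _ => rfl
  · intro a ha b hb hab
    have hsort := congrArg (·.sort) hab
    simp only [sort_cutPoints (mem_posAntidiagonalTuple.1 ha).2,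
      sort_cutPoints (mem_posAntidiagonalTuple.1 hb).2] at hsort
    rw [← gaps_partialSum a, ← gaps_partialSum b, ← extendEnds_interior_partialSum ha,
      ← extendEnds_interior_partialSum hb, List.ofFn_injective hsort]
  · intro A hA
    obtain ⟨hsub, hcard⟩ := mem_powersetCard.1 hA
    have hx j := mem_Icc.1 (hsub (A.orderEmbOfFin_mem hcard j))
    have hy := strictMono_extendEnds (A.orderEmbOfFin hcard).strictMono (fun j => (hx j).1)
      (fun j => by have := hx j; omega) hs
    exact ⟨_, gaps_extendEnds_mem hy, by
      rw [cutPoints_gaps_extendEnds hy.monotone, image_orderEmbOfFin_univ]⟩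

theorem weight_cutPoints {k s : ℕ} (hk : 0 < k) {a : Fin (k + 1) → ℕ}
    (ha : a ∈ posAntidiagonalTuple (k + 1) s) :
    1 / (((cutPoints a).sort (· ≤ ·)).head! : ℝ) * diffProd ((cutPoints a).sort (· ≤ ·)) *
        ((s : ℝ) / ((s : ℝ) - ((cutPoints a).sort (· ≤ ·)).getLast!))
      = s / ∏ i, (a i : ℝ) := by
  have hpos := (mem_posAntidiagonalTuple.1 ha).2
  rw [weight_eq_diffProd s (by simp [sort_cutPoints hpos]; omega), sort_cutPoints hpos,
    ← ofFn_extendEnds, extendEnds_interior_partialSum ha, diffProd_ofFn_partialSum]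
  simp [div_eq_mul_inv, prod_inv_distrib]

theorem sum_div_prod_eq_sum_inv_prod_removeNth {K : Type*} [Field K] {n : ℕ}
    (a : Fin (n + 1) → K) (ha : ∀ i, a i ≠ 0) :
    (∑ i, a i) / ∏ i, a i = ∑ j, 1 / ∏ i, Fin.removeNth j a i := by
  rw [sum_div]
  refine sum_congr rfl fun j _ => ?_
  rw [← Fin.mul_prod_removeNth j a, div_mul_cancel_left₀ (ha j), one_div]

theorem sum_posAntidiagonalTuple_removeNth {M : Type*} [AddCommMonoid M] {k s : ℕ}
    (hs : 0 < s) (j : Fin (k + 1)) (f : (Fin k → ℕ) → M) :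
    ∑ a ∈ posAntidiagonalTuple (k + 1) s, f (Fin.removeNth j a)
      = ∑ b ∈ (Fintype.piFinset fun _ : Fin k => Icc 1 (s - 1)).filter
          (fun b => ∑ i, b i ≤ s - 1), f b := by
  refine sum_nbij' (Fin.removeNth j) (fun b => Fin.insertNth j (s - ∑ i, b i) b) ?_ ?_ ?_ ?_
    fun _ _ => rfl
  · intro a ha
    obtain ⟨hsum, hpos⟩ := mem_posAntidiagonalTuple.1 ha
    have hsplit := Fin.add_sum_removeNth j a
    have hj := hpos j
    simp only [mem_filter, Fintype.mem_piFinset, mem_Icc]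
    refine ⟨fun i => ⟨hpos _, ?_⟩, by omega⟩
    have := single_le_sum (fun i _ => Nat.zero_le (Fin.removeNth j a i)) (mem_univ i)
    omega
  · intro b hb
    simp only [mem_filter, Fintype.mem_piFinset, mem_Icc] at hb
    refine mem_posAntidiagonalTuple.2 ⟨by rw [Fin.sum_insertNth]; omega, fun i => ?_⟩
    obtain rfl | ⟨i, rfl⟩ := j.eq_self_or_eq_succAbove i
    · rw [Fin.insertNth_apply_same]; omega
    · rw [Fin.insertNth_apply_succAbove]; exact (hb.1 i).1
  · intro a ha
    have hsplit := Fin.add_sum_removeNth j a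
    have hj : s - ∑ i, Fin.removeNth j a i = a j := by
      rw [(mem_posAntidiagonalTuple.1 ha).1] at hsplit; omega
    rw [hj, Fin.insertNth_self_removeNth]
  · intro b _
    exact Fin.removeNth_insertNth (α := fun _ => ℕ) j _ b

theorem increasing_tuple_identity_general (s k : ℕ) (hk : 1 ≤ k) :
    (∑ A ∈ Finset.powersetCard k (Finset.Icc 1 (s - 1)),
      (1 / (((A.sort (· ≤ ·)).head! : ℝ))) * diffProd (A.sort (· ≤ ·)) *
        ((s : ℝ) / ((s : ℝ) - ((A.sort (· ≤ ·)).getLast! : ℝ))))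
    = (k + 1) * ∑ a ∈ Finset.filter (fun a : Fin k → ℕ => ∑ i, a i ≤ s - 1)
        (Fintype.piFinset fun _ : Fin k => Finset.Icc 1 (s - 1)),
        (1 : ℝ) / ∏ i, (a i : ℝ) := by
  rcases Nat.eq_zero_or_pos s with rfl | hs
  · have : Nonempty (Fin k) := ⟨⟨0, hk⟩⟩
    simp [Fintype.piFinset_empty]
  have hexpand (a) (ha : a ∈ posAntidiagonalTuple (k + 1) s) :
      (s : ℝ) / ∏ i, (a i : ℝ) = ∑ j, 1 / ∏ i, (Fin.removeNth j a i : ℝ) := by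
    obtain ⟨hsum, hpos⟩ := mem_posAntidiagonalTuple.1 ha
    rw [← hsum, Nat.cast_sum]
    exact sum_div_prod_eq_sum_inv_prod_removeNth _ fun i => by have := hpos i; positivity
  calc _ = ∑ a ∈ posAntidiagonalTuple (k + 1) s, (s : ℝ) / ∏ i, (a i : ℝ) := by
        rw [sum_powersetCard_Icc_eq_sum_cutPoints hs]
        exact sum_congr rfl fun a ha => weight_cutPoints hk ha
    _ = ∑ j, ∑ a ∈ posAntidiagonalTuple (k + 1) s, 1 / ∏ i, (Fin.removeNth j a i : ℝ) := by
        rw [sum_congr rfl hexpand, sum_comm]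
    _ = ∑ _j : Fin (k + 1), ∑ b ∈ (Fintype.piFinset fun _ : Fin k => Icc 1 (s - 1)).filter
          (fun b => ∑ i, b i ≤ s - 1), 1 / ∏ i, (b i : ℝ) :=
        sum_congr rfl fun j _ =>
          sum_posAntidiagonalTuple_removeNth hs j fun b => 1 / ∏ i, (b i : ℝ)
    _ = _ := by
        rw [sum_const, card_univ, Fintype.card_fin, nsmul_eq_mul]
        push_cast
        rfl

/-- For `1 ≤ k ≤ s - 1`,
`∑_{x₁<…<x_k ⊆ {1,…,s-1}} ∏_{i=1}^{k-1} 1/(x_{i+1}-x_i) · s/(x₁(s-x_k))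
  = (k+1) ∑_{a₁+…+a_k ≤ s-1, aᵢ ≥ 1} 1/(a₁⋯a_k)`. -/
theorem increasing_tuple_identity (s k : ℕ) (hk : 1 ≤ k) (hks : k ≤ s - 1) :
    (∑ A ∈ Finset.powersetCard k (Finset.Icc 1 (s - 1)),
      (1 / (((A.sort (· ≤ ·)).head! : ℝ))) * diffProd (A.sort (· ≤ ·)) *
        ((s : ℝ) / ((s : ℝ) - ((A.sort (· ≤ ·)).getLast! : ℝ))))
    = (k + 1) * ∑ a ∈ Finset.filter (fun a : Fin k → ℕ => ∑ i, a i ≤ s - 1)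
        (Fintype.piFinset fun _ : Fin k => Finset.Icc 1 (s - 1)),
        (1 : ℝ) / ∏ i, (a i : ℝ) :=
  increasing_tuple_identity_general s k hk
end

section
/- Let (S_n) be simple random walk on ℤ starting at 0, with stopping times σ_i and τ_i as the alternating inward/outward excursion times (τ_1 = 1; σ_i is the first time after τ_i the walk re-enters the range [N_{τ_i−1}, M_{τ_i−1}]; τ_{i+1} is the first time after σ_i the walk exits [N_{σ_i}, M_{σ_i}]). Then for every i ∈ ℕ and every n with σ_i ≤ n ≤ τ_{i+1} − 1, the set of sites visited exactly once by (S_0, ..., S_n) is contained in {N_{σ_i}, M_{σ_i}}; in particular, it has at most 2 elements. -/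
open MeasureTheory ProbabilityTheory Filter
open scoped ENNReal

/-- Running maximum `M_n = max_{0 ≤ i ≤ n} S_i`. -/
noncomputable def runMax {Ω : Type*} (S : ℕ → Ω → ℤ) (n : ℕ) (ω : Ω) : ℤ :=
  Finset.sup' (Finset.range (n + 1)) (by simp) fun i => S i ω

/-- Running minimum `N_n = min_{0 ≤ i ≤ n} S_i`. -/
noncomputable def runMin {Ω : Type*} (S : ℕ → Ω → ℤ) (n : ℕ) (ω : Ω) : ℤ :=
  Finset.inf' (Finset.range (n + 1)) (by simp) fun i => S i ω

/-- The alternating stopping times of the walk: `tauSig S i = (τ_i, σ_i)` for `i ≥ 1`,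
where `τ₁ = 1`, `σ_i = inf{k > τ_i : S_k ∈ [N_{τ_i - 1}, M_{τ_i - 1}]}` and
`τ_{i+1} = inf{k > σ_i : S_k ∉ [N_{σ_i}, M_{σ_i}]}` (with `inf ∅ = 0`). -/
noncomputable def tauSig {Ω : Type*} (S : ℕ → Ω → ℤ) : ℕ → (Ω → ℕ) × (Ω → ℕ)
  | 0 => (fun _ => 1, fun _ => 0)
  | i + 1 =>
      let τ : Ω → ℕ :=
        if i = 0 then fun _ => 1
        else fun ω =>
          sInf {k | (tauSig S i).2 ω < k ∧
            (S k ω < runMin S ((tauSig S i).2 ω) ω ∨ runMax S ((tauSig S i).2 ω) ω < S k ω)}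
      (τ, fun ω =>
        sInf {k | τ ω < k ∧ runMin S (τ ω - 1) ω ≤ S k ω ∧ S k ω ≤ runMax S (τ ω - 1) ω})

/-!
The property that every site strictly between `N_m` and `M_m` is visited at least twice by time
`m` passes from `m` to any later time `s` at which the walk is back in `[N_m, M_m]`: a new site
`x ≥ M_m` lies below the peak `M_s`, which is reached after `m`, so the nearest-neighbour walk
crosses `x` on its way up to the peak and again on its way down to `S_s ≤ M_m` (symmetrically
below `N_m`). The property holds trivially at time `0`; each `σ_i` is a return into
`[N_{τ_i - 1}, M_{τ_i - 1}]` and each `τ_{i+1} - 1` lies in `[N_{σ_i}, M_{σ_i}]`, so it holds at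
every `σ_i`. For `σ_i ≤ n < τ_{i+1}` the walk has stayed in `[N_{σ_i}, M_{σ_i}]`, so a site visited
only once by time `n` is one of the two endpoints.
-/

open Set

lemma Nat.sInf_eq_zero_or_mem (s : Set ℕ) : sInf s = 0 ∨ sInf s ∈ s := by
  rcases s.eq_empty_or_nonempty with rfl | hs
  · exact Or.inl Nat.sInf_empty
  · exact Or.inr (Nat.sInf_mem hs)

section Path

variable {Ω : Type*} {S : ℕ → Ω → ℤ} {ω : Ω}

lemma le_runMax {k n : ℕ} (h : k ≤ n) : S k ω ≤ runMax S n ω :=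
  Finset.le_sup' (fun i => S i ω) (Finset.mem_range.mpr (Nat.lt_succ_of_le h))

lemma runMin_le {k n : ℕ} (h : k ≤ n) : runMin S n ω ≤ S k ω :=
  Finset.inf'_le (fun i => S i ω) (Finset.mem_range.mpr (Nat.lt_succ_of_le h))

lemma exists_eq_runMax (n : ℕ) : ∃ k ≤ n, S k ω = runMax S n ω := by
  obtain ⟨k, hk, hkmax⟩ := Finset.exists_mem_eq_sup' Finset.nonempty_range_add_one (S · ω)
  exact ⟨k, Nat.lt_succ_iff.mp (Finset.mem_range.mp hk), hkmax.symm⟩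

lemma exists_eq_runMin (n : ℕ) : ∃ k ≤ n, S k ω = runMin S n ω := by
  obtain ⟨k, hk, hkmin⟩ := Finset.exists_mem_eq_inf' Finset.nonempty_range_add_one (S · ω)
  exact ⟨k, Nat.lt_succ_iff.mp (Finset.mem_range.mp hk), hkmin.symm⟩

lemma runMin_zero_eq_runMax_zero : runMin S 0 ω = runMax S 0 ω := by
  simp [runMin, runMax]

variable (S ω) in
def VisitedTwice (m : ℕ) (x : ℤ) : Prop :=
  ∃ t₁ t₂, t₁ < t₂ ∧ t₂ ≤ m ∧ S t₁ ω = x ∧ S t₂ ω = x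

lemma VisitedTwice.mono {m n : ℕ} {x : ℤ} (h : VisitedTwice S ω m x) (hmn : m ≤ n) :
    VisitedTwice S ω n x :=
  let ⟨t₁, t₂, hlt, hle, h₁, h₂⟩ := h
  ⟨t₁, t₂, hlt, hle.trans hmn, h₁, h₂⟩

lemma VisitedTwice.not_existsUnique {m n : ℕ} {x : ℤ} (h : VisitedTwice S ω m x)
    (hmn : m ≤ n) : ¬ ∃! j, j ≤ n ∧ S j ω = x := by
  obtain ⟨t₁, t₂, hlt, hle, h₁, h₂⟩ := h
  rintro ⟨j, -, huniq⟩
  have := (huniq t₁ ⟨by omega, h₁⟩).trans (huniq t₂ ⟨by omega, h₂⟩).symm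
  omega

variable (S ω) in
def InteriorVisitedTwice (m : ℕ) : Prop :=
  ∀ x ∈ Ioo (runMin S m ω) (runMax S m ω), VisitedTwice S ω m x

lemma interiorVisitedTwice_zero : InteriorVisitedTwice S ω 0 := by
  intro x hx
  rw [runMin_zero_eq_runMax_zero, Ioo_self] at hx
  exact hx.elim

variable (hstep : ∀ n, S (n + 1) ω = S n ω + 1 ∨ S (n + 1) ω = S n ω - 1)
include hstep

lemma exists_eq_of_mem_uIcc {a b : ℕ} (hab : a ≤ b) {x : ℤ} (hx : x ∈ uIcc (S a ω) (S b ω)) :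
    ∃ t, a ≤ t ∧ t ≤ b ∧ S t ω = x := by
  induction b, hab using Nat.le_induction with
  | base => exact ⟨a, le_rfl, le_rfl, by simpa [eq_comm] using hx⟩
  | succ b hab ih =>
    by_cases hxb : S (b + 1) ω = x
    · exact ⟨b + 1, by omega, le_rfl, hxb⟩
    · have hx' : x ∈ uIcc (S a ω) (S b ω) := by
        rw [mem_uIcc] at hx ⊢
        rcases hstep b with h | h <;> omega
      obtain ⟨t, hat, htb, ht⟩ := ih hx'
      exact ⟨t, hat, htb.trans b.le_succ, ht⟩

-- `b` is a peak (or a valley) relative to `x` between `a` and `c`.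
lemma visitedTwice_of_mem_uIcc {a b c : ℕ} (hab : a ≤ b) (hbc : b ≤ c) {x : ℤ}
    (hxa : x ∈ uIcc (S a ω) (S b ω)) (hxc : x ∈ uIcc (S b ω) (S c ω)) (hxb : S b ω ≠ x) :
    VisitedTwice S ω c x := by
  obtain ⟨t₁, -, ht₁b, ht₁⟩ := exists_eq_of_mem_uIcc hstep hab hxa
  obtain ⟨t₂, hbt₂, ht₂c, ht₂⟩ := exists_eq_of_mem_uIcc hstep hbc hxc
  have : t₁ ≠ b := by rintro rfl; exact hxb ht₁
  have : t₂ ≠ b := by rintro rfl; exact hxb ht₂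
  exact ⟨t₁, t₂, by omega, ht₂c, ht₁, ht₂⟩

lemma InteriorVisitedTwice.of_mem_Icc {m s : ℕ} (h : InteriorVisitedTwice S ω m) (hms : m ≤ s)
    (hs : S s ω ∈ Icc (runMin S m ω) (runMax S m ω)) : InteriorVisitedTwice S ω s := by
  obtain ⟨hs₁, hs₂⟩ := hs
  rintro x ⟨hlo, hhi⟩
  by_cases hx : x ∈ Ioo (runMin S m ω) (runMax S m ω)
  · exact (h x hx).mono hms
  rw [mem_Ioo, not_and_or, not_lt, not_lt] at hx
  rcases hx with hx | hx
  · obtain ⟨b, hbs, hb⟩ := exists_eq_runMin (S := S) (ω := ω) s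
    have hmb : m ≤ b := by
      by_contra! hbm
      linarith [runMin_le (S := S) (ω := ω) hbm.le]
    have hm := runMin_le (S := S) (ω := ω) (le_refl m)
    refine visitedTwice_of_mem_uIcc hstep hmb hbs ?_ ?_ (by omega) <;>
      rw [mem_uIcc] <;> omega
  · obtain ⟨b, hbs, hb⟩ := exists_eq_runMax (S := S) (ω := ω) s
    have hmb : m ≤ b := by
      by_contra! hbm
      linarith [le_runMax (S := S) (ω := ω) hbm.le]
    have hm := le_runMax (S := S) (ω := ω) (le_refl m)
    refine visitedTwice_of_mem_uIcc hstep hmb hbs ?_ ?_ (by omega) <;>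
      rw [mem_uIcc] <;> omega

end Path

section Excursions

variable {Ω : Type*} {S : ℕ → Ω → ℤ} {ω : Ω} {i : ℕ}

lemma tauSig_one_fst : (tauSig S 1).1 ω = 1 := by
  simp [tauSig]

lemma tauSig_succ_fst (hi : i ≠ 0) :
    (tauSig S (i + 1)).1 ω = sInf {k | (tauSig S i).2 ω < k ∧
      (S k ω < runMin S ((tauSig S i).2 ω) ω ∨ runMax S ((tauSig S i).2 ω) ω < S k ω)} := by
  simp [tauSig, hi]

lemma tauSig_succ_snd :
    (tauSig S (i + 1)).2 ω = sInf {k | (tauSig S (i + 1)).1 ω < k ∧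
      runMin S ((tauSig S (i + 1)).1 ω - 1) ω ≤ S k ω ∧
      S k ω ≤ runMax S ((tauSig S (i + 1)).1 ω - 1) ω} :=
  rfl

lemma tauSig_succ_fst_eq_zero_or_lt (hi : i ≠ 0) :
    (tauSig S (i + 1)).1 ω = 0 ∨ (tauSig S i).2 ω < (tauSig S (i + 1)).1 ω := by
  rw [tauSig_succ_fst hi]
  exact (Nat.sInf_eq_zero_or_mem _).imp_right And.left

lemma mem_Icc_of_lt_tauSig_succ_fst (hi : i ≠ 0) {k : ℕ} (hk : k < (tauSig S (i + 1)).1 ω) :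
    S k ω ∈ Icc (runMin S ((tauSig S i).2 ω) ω) (runMax S ((tauSig S i).2 ω) ω) := by
  rcases le_or_gt k ((tauSig S i).2 ω) with hkσ | hσk
  · exact ⟨runMin_le hkσ, le_runMax hkσ⟩
  · rw [tauSig_succ_fst hi] at hk
    have hk := Nat.notMem_of_lt_sInf hk
    exact ⟨le_of_not_gt fun h => hk ⟨hσk, Or.inl h⟩, le_of_not_gt fun h => hk ⟨hσk, Or.inr h⟩⟩

lemma tauSig_succ_snd_eq_zero_or :
    (tauSig S (i + 1)).2 ω = 0 ∨ ((tauSig S (i + 1)).1 ω - 1 ≤ (tauSig S (i + 1)).2 ω ∧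
      S ((tauSig S (i + 1)).2 ω) ω ∈
        Icc (runMin S ((tauSig S (i + 1)).1 ω - 1) ω)
          (runMax S ((tauSig S (i + 1)).1 ω - 1) ω)) := by
  rw [tauSig_succ_snd]
  exact (Nat.sInf_eq_zero_or_mem _).imp_right fun ⟨hlt, hmem⟩ => ⟨by omega, hmem⟩

variable (hstep : ∀ n, S (n + 1) ω = S n ω + 1 ∨ S (n + 1) ω = S n ω - 1)
include hstep

lemma InteriorVisitedTwice.tauSig_succ_snd
    (h : InteriorVisitedTwice S ω ((tauSig S (i + 1)).1 ω - 1)) :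
    InteriorVisitedTwice S ω ((tauSig S (i + 1)).2 ω) := by
  rcases tauSig_succ_snd_eq_zero_or (S := S) (ω := ω) (i := i) with h0 | ⟨hle, hmem⟩
  · exact h0 ▸ interiorVisitedTwice_zero
  · exact h.of_mem_Icc hstep hle hmem

lemma InteriorVisitedTwice.tauSig_succ_fst_sub_one (hi : i ≠ 0)
    (h : InteriorVisitedTwice S ω ((tauSig S i).2 ω)) :
    InteriorVisitedTwice S ω ((tauSig S (i + 1)).1 ω - 1) := by
  rcases tauSig_succ_fst_eq_zero_or_lt (S := S) (ω := ω) hi with h0 | hlt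
  · exact h0 ▸ interiorVisitedTwice_zero
  · exact h.of_mem_Icc hstep (by omega) (mem_Icc_of_lt_tauSig_succ_fst hi (by omega))

lemma interiorVisitedTwice_tauSig_snd (hi : 1 ≤ i) :
    InteriorVisitedTwice S ω ((tauSig S i).2 ω) := by
  induction i, hi using Nat.le_induction with
  | base =>
    refine InteriorVisitedTwice.tauSig_succ_snd (i := 0) hstep ?_
    simpa [tauSig_one_fst] using interiorVisitedTwice_zero
  | succ i hi ih =>
    exact (ih.tauSig_succ_fst_sub_one hstep (by omega)).tauSig_succ_snd hstep

end Excursions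

theorem once_visited_between_excursions_general
    {Ω : Type*} [MeasureSpace Ω]
    (S : ℕ → Ω → ℤ)
    (hstep : ∀ ω n, S (n + 1) ω = S n ω + 1 ∨ S (n + 1) ω = S n ω - 1)
    :
    ∀ᵐ ω ∂(ℙ : Measure Ω), ∀ i : ℕ, 1 ≤ i → ∀ n : ℕ,
      (tauSig S i).2 ω ≤ n → n + 1 ≤ (tauSig S (i + 1)).1 ω →
      {x : ℤ | ∃! j : ℕ, j ≤ n ∧ S j ω = x} ⊆
          {runMin S ((tauSig S i).2 ω) ω, runMax S ((tauSig S i).2 ω) ω} ∧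
        Set.ncard {x : ℤ | ∃! j : ℕ, j ≤ n ∧ S j ω = x} ≤ 2 := by
  refine ae_of_all _ fun ω i hi n hσn hnτ => ?_
  have hsub : {x : ℤ | ∃! j : ℕ, j ≤ n ∧ S j ω = x} ⊆
      {runMin S ((tauSig S i).2 ω) ω, runMax S ((tauSig S i).2 ω) ω} := by
    intro x hx
    obtain ⟨j, ⟨hjn, rfl⟩, -⟩ := id hx
    have hjτ : j < (tauSig S (i + 1)).1 ω := by omega
    obtain ⟨hlo, hhi⟩ := mem_Icc_of_lt_tauSig_succ_fst (by omega) hjτ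
    by_contra hne
    simp only [mem_insert_iff, mem_singleton_iff, not_or] at hne
    exact (interiorVisitedTwice_tauSig_snd (hstep ω) hi _
      ⟨lt_of_le_of_ne hlo (Ne.symm hne.1), lt_of_le_of_ne hhi hne.2⟩).not_existsUnique hσn hx
  refine ⟨hsub, (ncard_le_ncard hsub (toFinite _)).trans ?_⟩
  exact (ncard_insert_le _ _).trans (by simp)

/-- For simple random walk `S` started at `0` with alternating stopping
times `τ_i, σ_i`, almost surely: for every `i ≥ 1` and every `n` with
`σ_i ≤ n ≤ τ_{i+1} - 1`, the set of sites visited exactly once by `(S_0, …, S_n)` is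
contained in `{N_{σ_i}, M_{σ_i}}`; in particular it has at most two elements. -/
theorem once_visited_between_excursions
    {Ω : Type*} [MeasureSpace Ω] [IsProbabilityMeasure (ℙ : Measure Ω)]
    (S : ℕ → Ω → ℤ) (hmeas : ∀ n, Measurable (S n))
    (h0 : ∀ ω, S 0 ω = 0)
    (hstep : ∀ ω n, S (n + 1) ω = S n ω + 1 ∨ S (n + 1) ω = S n ω - 1)
    (hup : ∀ (n : ℕ) (a : ℕ → ℤ),
      ℙ ({ω | ∀ i ≤ n, S i ω = a i} ∩ {ω | S (n + 1) ω = a n + 1})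
        = (1 / 2) * ℙ {ω | ∀ i ≤ n, S i ω = a i})
    (hdown : ∀ (n : ℕ) (a : ℕ → ℤ),
      ℙ ({ω | ∀ i ≤ n, S i ω = a i} ∩ {ω | S (n + 1) ω = a n - 1})
        = (1 / 2) * ℙ {ω | ∀ i ≤ n, S i ω = a i})
    :
    ∀ᵐ ω ∂(ℙ : Measure Ω), ∀ i : ℕ, 1 ≤ i → ∀ n : ℕ,
      (tauSig S i).2 ω ≤ n → n + 1 ≤ (tauSig S (i + 1)).1 ω →
      {x : ℤ | ∃! j : ℕ, j ≤ n ∧ S j ω = x} ⊆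
          {runMin S ((tauSig S i).2 ω) ω, runMax S ((tauSig S i).2 ω) ω} ∧
        Set.ncard {x : ℤ | ∃! j : ℕ, j ≤ n ∧ S j ω = x} ≤ 2 :=
  once_visited_between_excursions_general S hstep
end

section
/- Let (S_n) be simple random walk on ℤ started at 0 and g_1(n) the number of sites visited exactly once up to time n. Then E[g_1(n)] = 2 for every n ≥ 1. -/
/-!
Given the first `n` steps, each of the `2 ^ n` step sequences has probability `2⁻ⁿ`, so
`2 ^ n • E[g₁(n)]` counts pairs (path, time `j`) whose site at time `j` is visited at no other
time. Such a pair splits at `j` into a `j`-step path ending at a fresh site and an `(n - j)`-step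
path never returning to its start; time reversal turns the first kind into the second, so the count
is `∑ j, a j * a (n - j)` with `a k` the number of `k`-step paths avoiding their origin. Splitting
a `2m`-step path at its last zero gives `4 ^ m = ∑ i, C(2i, i) * a (2m - 2i)`; comparing with
`∑ i, C(2i, i) * C(2m - 2i, m - i) = 4 ^ m` yields `a (2m) = C(2m, m)`, parity gives
`a (2m + 1) = 2 * a (2m)`, and the convolution evaluates to `2 ^ (n + 1)`.
-/

open Finset MeasureTheory

lemma two_mul_sum_antidiagonal_fst_mul (f : ℕ → ℕ) (m : ℕ) :
    2 * ∑ p ∈ antidiagonal m, p.1 * (f p.1 * f p.2) = m * ∑ p ∈ antidiagonal m, f p.1 * f p.2 := by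
  have hswap : ∑ p ∈ antidiagonal m, p.1 * (f p.1 * f p.2)
      = ∑ p ∈ antidiagonal m, p.2 * (f p.1 * f p.2) := by
    rw [← Nat.sum_antidiagonal_swap]
    exact sum_congr rfl fun p _ => by simp [mul_comm (f p.2)]
  rw [two_mul]
  nth_rewrite 2 [hswap]
  rw [← sum_add_distrib, mul_sum]
  exact sum_congr rfl fun p hp => by rw [← add_mul, mem_antidiagonal.mp hp]

/- With `T m = ∑ C(2i, i) C(2k, k)` and `W m = ∑ i C(2i, i) C(2k, k)` over `i + k = m`, symmetry
gives `2 W m = m T m`, and `(i + 1) C(2i + 2, i + 1) = 2 (2i + 1) C(2i, i)` gives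
`W (m + 1) = 4 W m + 2 T m`; together, `(m + 1) T (m + 1) = 4 (m + 1) T m`. -/
lemma sum_antidiagonal_centralBinom_mul (m : ℕ) :
    ∑ p ∈ antidiagonal m, p.1.centralBinom * p.2.centralBinom = 4 ^ m := by
  induction m with
  | zero => simp
  | succ m ih =>
    have hweighted : ∑ p ∈ antidiagonal (m + 1), p.1 * (p.1.centralBinom * p.2.centralBinom)
        = 4 * ∑ p ∈ antidiagonal m, p.1 * (p.1.centralBinom * p.2.centralBinom)
          + 2 * ∑ p ∈ antidiagonal m, p.1.centralBinom * p.2.centralBinom := by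
      rw [Nat.sum_antidiagonal_succ, zero_mul, zero_add, mul_sum, mul_sum, ← sum_add_distrib]
      refine sum_congr rfl fun p _ => ?_
      rw [← mul_assoc, Nat.succ_mul_centralBinom_succ]
      ring
    have h := two_mul_sum_antidiagonal_fst_mul Nat.centralBinom (m + 1)
    rw [hweighted, ih, mul_add, ← mul_assoc, mul_comm 2 4, mul_assoc,
      two_mul_sum_antidiagonal_fst_mul, ih] at h
    have : (m + 1) * ∑ p ∈ antidiagonal (m + 1), p.1.centralBinom * p.2.centralBinom
        = (m + 1) * 4 ^ (m + 1) := by rw [← h]; ring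
    exact Nat.eq_of_mul_eq_mul_left m.succ_pos this

lemma sum_range_two_mul {M : Type*} [AddCommMonoid M] (h : ℕ → M) (k : ℕ) :
    ∑ j ∈ range (2 * k), h j = ∑ i ∈ range k, (h (2 * i) + h (2 * i + 1)) := by
  induction k with
  | zero => simp
  | succ k ih =>
    rw [mul_add, mul_one, sum_range_succ, sum_range_succ, sum_range_succ, ih, add_assoc]

def uniqueTimes {α : Type*} [DecidableEq α] (s : ℕ → α) (n : ℕ) : Finset ℕ :=
  {j ∈ range (n + 1) | ∀ i ≤ n, i ≠ j → s i ≠ s j}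

lemma uniqueTimes_congr {α : Type*} [DecidableEq α] {s s' : ℕ → α} {n : ℕ}
    (h : ∀ i ≤ n, s i = s' i) :
    uniqueTimes s n = uniqueTimes s' n :=
  filter_congr fun j hj => by
    simp only [mem_range] at hj
    exact forall₂_congr fun i hi => by rw [h i hi, h j (by omega)]

lemma ncard_existsUnique_eq_card_uniqueTimes {α : Type*} [DecidableEq α] (s : ℕ → α) (n : ℕ) :
    {x | ∃! j, j ≤ n ∧ s j = x}.ncard = #(uniqueTimes s n) := by
  have hset : {x | ∃! j, j ≤ n ∧ s j = x} = ((uniqueTimes s n).image s : Set α) := by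
    ext x
    simp only [uniqueTimes, coe_image, coe_filter, mem_range, Set.mem_image, Set.mem_ofPred_eq]
    constructor
    · rintro ⟨j, ⟨hj, rfl⟩, huniq⟩
      exact ⟨j, ⟨by omega, fun i hi hij hs => hij (huniq i ⟨hi, hs⟩)⟩, rfl⟩
    · rintro ⟨j, ⟨hj, huniq⟩, rfl⟩
      refine ⟨j, ⟨by omega, rfl⟩, fun i ⟨hi, hs⟩ => ?_⟩
      by_contra hij
      exact huniq i hi hij hs
  rw [hset, Set.ncard_coe_finset]
  refine card_image_of_injOn fun j hj j' hj' hs => ?_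
  by_contra hjj'
  simp only [uniqueTimes, coe_filter, mem_range, Set.mem_ofPred_eq] at hj hj'
  exact hj.2 j' (by omega) (Ne.symm hjj') hs.symm

lemma integral_comp_eq_sum {Ω α : Type*} [MeasurableSpace Ω] {μ : Measure Ω} [IsFiniteMeasure μ]
    [Fintype α] [MeasurableSpace α] [MeasurableSingletonClass α] {X : Ω → α} (hX : Measurable X)
    (g : α → ℝ) : ∫ ω, g (X ω) ∂μ = ∑ a, μ.real (X ⁻¹' {a}) * g a := by
  rw [← integral_map hX.aemeasurable StronglyMeasurable.of_discrete.aestronglyMeasurable,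
    integral_fintype .of_finite]
  simp [map_measureReal_apply hX (measurableSet_singleton _)]

namespace SimpleRandomWalk

def step (b : Bool) : ℤ := if b then 1 else -1

def walk (f : ℕ → Bool) (k : ℕ) : ℤ := ∑ i ∈ range k, step (f i)

@[simp] lemma walk_zero (f : ℕ → Bool) : walk f 0 = 0 := by simp [walk]

lemma walk_succ (f : ℕ → Bool) (k : ℕ) : walk f (k + 1) = walk f k + step (f k) :=
  sum_range_succ _ _

lemma walk_add (f : ℕ → Bool) (a t : ℕ) :
    walk f (a + t) = walk f a + walk (fun i => f (a + i)) t :=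
  sum_range_add _ _ _

lemma walk_congr {f g : ℕ → Bool} {n k : ℕ} (h : ∀ i < n, f i = g i) (hk : k ≤ n) :
    walk f k = walk g k :=
  sum_congr rfl fun i hi => by rw [h i (by simp at hi; omega)]

lemma walk_shift_eq_sub (f : ℕ → Bool) (a t : ℕ) :
    walk (fun i => f (a + i)) t = walk f (a + t) - walk f a := by
  rw [walk_add]; ring

lemma even_walk_add (f : ℕ → Bool) (k : ℕ) : Even (walk f k + k) := by
  induction k with
  | zero => simp
  | succ k ih =>
    rw [walk_succ, step, Nat.cast_succ]
    split_ifs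
    · rw [show walk f k + 1 + (k + 1) = walk f k + k + 2 by ring]
      exact ih.add even_two
    · rwa [show walk f k + -1 + (k + 1) = walk f k + k by ring]

lemma walk_ne_zero_of_odd (f : ℕ → Bool) {k : ℕ} (hk : Odd k) : walk f k ≠ 0 := by
  intro h
  have := even_walk_add f k
  rw [h, zero_add, Int.even_coe_nat] at this
  exact Nat.not_even_iff_odd.mpr hk this

def extend {n : ℕ} (ε : Fin n → Bool) (i : ℕ) : Bool := if h : i < n then ε ⟨i, h⟩ else false

lemma extend_of_lt {n : ℕ} (ε : Fin n → Bool) {i : ℕ} (h : i < n) : extend ε i = ε ⟨i, h⟩ :=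
  dif_pos h

/- The predicate sees the steps padded with `false`; counts are only meaningful for predicates that
depend on the first `n` steps. -/
open Classical in
noncomputable def pathCount (n : ℕ) (P : (ℕ → Bool) → Prop) : ℕ :=
  #{ε : Fin n → Bool | P (extend ε)}

lemma pathCount_add {a b : ℕ} {p q : (ℕ → Bool) → Prop}
    (hp : DependsOn p (Set.Iio a)) (hq : DependsOn q (Set.Iio b)) :
    pathCount (a + b) (fun f => p f ∧ q (fun t => f (a + t))) = pathCount a p * pathCount b q := by
  rw [pathCount, pathCount, pathCount, ← card_product, ← filter_product]
  refine (card_equiv (Fin.appendEquiv a b) fun uv => ?_).symm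
  have hleft : p (extend uv.1) ↔ p (extend (Fin.append uv.1 uv.2)) := by
    refine iff_of_eq (hp fun i hi => ?_)
    have hi : i < a := hi
    rw [extend_of_lt _ hi, extend_of_lt _ (by omega)]
    exact (Fin.append_left uv.1 uv.2 ⟨i, hi⟩).symm
  have hright : q (extend uv.2) ↔ q (fun t => extend (Fin.append uv.1 uv.2) (a + t)) := by
    refine iff_of_eq (hq fun t ht => ?_)
    have ht : t < b := ht
    rw [extend_of_lt _ ht, extend_of_lt _ (by omega)]
    exact (Fin.append_right uv.1 uv.2 ⟨t, ht⟩).symm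
  simp only [mem_filter, mem_product, mem_univ, true_and]
  exact and_congr hleft hright

lemma walk_extend_eq (n : ℕ) (ε : Fin n → Bool) :
    walk (extend ε) n = 2 * #{i | ε i} - n := by
  have hstep : ∀ b, step b = 2 * (if b then 1 else 0) - 1 := by decide
  rw [walk, ← Fin.sum_univ_eq_sum_range]
  simp only [extend_of_lt _ (Fin.is_lt _), hstep, sum_sub_distrib, ← mul_sum, Fin.eta]
  simp [sum_boole]

lemma pathCount_walk_eq_zero (m : ℕ) :
    pathCount (2 * m) (fun f => walk f (2 * m) = 0) = m.centralBinom := by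
  have hcard : m.centralBinom = #(powersetCard m (univ : Finset (Fin (2 * m)))) := by
    simp [Nat.centralBinom]
  rw [pathCount, hcard]
  refine card_nbij' (fun ε => ({i | ε i} : Finset _)) (fun s i => decide (i ∈ s)) ?_ ?_ ?_ ?_
  · intro ε hε
    simp only [coe_filter, mem_univ, true_and, Set.mem_ofPred_eq, walk_extend_eq] at hε
    simp only [mem_coe, mem_powersetCard, subset_univ, true_and]
    omega
  · intro s hs
    simp only [mem_coe, mem_powersetCard] at hs
    simp [walk_extend_eq, hs.2]
  · intro ε _; ext; simp
  · intro s _; ext; simp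

def NoReturn (n : ℕ) (f : ℕ → Bool) : Prop := ∀ k, 0 < k → k ≤ n → walk f k ≠ 0

noncomputable def noReturnCount (n : ℕ) : ℕ := pathCount n (NoReturn n)

lemma dependsOn_noReturn (n : ℕ) : DependsOn (NoReturn n) (Set.Iio n) := fun f g h => by
  simp only [NoReturn]
  exact propext <| forall_congr' fun k => imp_congr_right fun _ => imp_congr_right fun hk => by
    rw [walk_congr h hk]

lemma dependsOn_walk_eq_zero (k : ℕ) : DependsOn (fun f => walk f k = 0) (Set.Iio k) :=
  fun f g h => by
    change (walk f k = 0) = (walk g k = 0)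
    rw [walk_congr h le_rfl]

lemma findGreatest_walk_eq_iff (f : ℕ → Bool) (i k : ℕ) :
    Nat.findGreatest (fun j => walk f (2 * j) = 0) (i + k) = i ↔
      walk f (2 * i) = 0 ∧ NoReturn (2 * k) (fun t => f (2 * i + t)) := by
  rw [Nat.findGreatest_eq_iff]
  constructor
  · rintro ⟨-, hzero, hlast⟩
    have hi : walk f (2 * i) = 0 := by
      rcases Nat.eq_zero_or_pos i with rfl | hi
      · simp
      · exact hzero hi.ne'
    refine ⟨hi, fun t ht htk => ?_⟩
    rw [walk_shift_eq_sub, hi, sub_zero]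
    rcases Nat.even_or_odd t with ⟨u, rfl⟩ | hodd
    · rw [← two_mul, ← mul_add]
      exact hlast (by omega) (by omega)
    · exact walk_ne_zero_of_odd f ((even_two_mul i).add_odd hodd)
  · rintro ⟨hi, hnoReturn⟩
    refine ⟨by omega, fun _ => hi, fun j hij hjk hj => ?_⟩
    have := hnoReturn (2 * j - 2 * i) (by omega) (by omega)
    rw [walk_shift_eq_sub, hi, sub_zero, show 2 * i + (2 * j - 2 * i) = 2 * j by omega] at this
    exact this hj

-- Split each `2m`-step path at its last zero `2i`.
lemma four_pow_eq_sum_centralBinom_mul_noReturnCount (m : ℕ) :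
    4 ^ m = ∑ p ∈ antidiagonal m, p.1.centralBinom * noReturnCount (2 * p.2) := by
  let lastZero (ε : Fin (2 * m) → Bool) : ℕ :=
    Nat.findGreatest (fun j => walk (extend ε) (2 * j) = 0) m
  have hfibers := card_eq_sum_card_fiberwise (s := univ) (t := range (m + 1)) (f := lastZero)
    fun ε _ => mem_range.mpr (Nat.lt_succ_of_le (Nat.findGreatest_le m))
  rw [card_univ, Fintype.card_fun, Fintype.card_bool, Fintype.card_fin, pow_mul,
    show 2 ^ 2 = 4 by rfl,
    ← Nat.sum_antidiagonal_eq_sum_range_succ (fun i _ => #{ε ∈ univ | lastZero ε = i})] at hfibers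
  refine hfibers.trans (sum_congr rfl fun p hp => ?_)
  obtain ⟨i, k⟩ := p
  obtain rfl : i + k = m := mem_antidiagonal.mp hp
  calc #{ε ∈ univ | lastZero ε = i}
      = pathCount (2 * i + 2 * k)
          (fun f => walk f (2 * i) = 0 ∧ NoReturn (2 * k) (fun t => f (2 * i + t))) := by
        rw [← mul_add, pathCount]
        congr 1
        ext ε
        simp [lastZero, findGreatest_walk_eq_iff]
    _ = i.centralBinom * noReturnCount (2 * k) := by
        rw [pathCount_add (dependsOn_walk_eq_zero _) (dependsOn_noReturn _),
          pathCount_walk_eq_zero, noReturnCount]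

lemma noReturnCount_two_mul (m : ℕ) : noReturnCount (2 * m) = m.centralBinom := by
  induction m using Nat.strong_induction_on with
  | _ m ih =>
    have h0 : ((0, m) : ℕ × ℕ) ∈ antidiagonal m := mem_antidiagonal.mpr (zero_add m)
    have hdecomp := four_pow_eq_sum_centralBinom_mul_noReturnCount m
    rw [← sum_antidiagonal_centralBinom_mul m, ← add_sum_erase _ _ h0,
      ← add_sum_erase _ _ h0] at hdecomp
    have hrest : ∑ p ∈ (antidiagonal m).erase (0, m), p.1.centralBinom * p.2.centralBinom
        = ∑ p ∈ (antidiagonal m).erase (0, m), p.1.centralBinom * noReturnCount (2 * p.2) := by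
      refine sum_congr rfl fun ⟨i, k⟩ hp => ?_
      simp only [mem_erase, ne_eq, Prod.mk.injEq, HasAntidiagonal.mem_antidiagonal] at hp
      rw [ih k (by omega)]
    simpa [hrest] using hdecomp.symm

lemma noReturnCount_two_mul_add_one (m : ℕ) : noReturnCount (2 * m + 1) = 2 * m.centralBinom := by
  have hsplit : NoReturn (2 * m + 1) = fun f => NoReturn (2 * m) f ∧ True := by
    refine funext fun f => propext ⟨fun h => ⟨fun k hk hkm => h k hk (by omega), trivial⟩, ?_⟩
    rintro ⟨h, -⟩ k hk hkm
    rcases hkm.lt_or_eq with hkm | rfl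
    · exact h k hk (by omega)
    · exact walk_ne_zero_of_odd f (odd_two_mul_add_one m)
  have h := pathCount_add (dependsOn_noReturn (2 * m)) (q := fun _ => True) (b := 1)
    fun _ _ _ => rfl
  rw [noReturnCount, hsplit]
  refine h.trans ?_
  rw [← noReturnCount, noReturnCount_two_mul]
  simp [pathCount, mul_comm]

lemma sum_range_centralBinom_mul (m : ℕ) :
    ∑ i ∈ range (m + 1), i.centralBinom * (m - i).centralBinom = 4 ^ m := by
  rw [← Nat.sum_antidiagonal_eq_sum_range_succ (fun i k => i.centralBinom * k.centralBinom),
    sum_antidiagonal_centralBinom_mul]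

lemma sum_range_noReturnCount_mul_of_even (m : ℕ) :
    ∑ j ∈ range (2 * (m + 1) + 1), noReturnCount j * noReturnCount (2 * (m + 1) - j)
      = 2 ^ (2 * (m + 1) + 1) := by
  have hlast := sum_range_centralBinom_mul (m + 1)
  rw [sum_range_succ, Nat.sub_self, pow_succ] at hlast
  rw [sum_range_succ, sum_range_two_mul, Nat.sub_self]
  calc ∑ i ∈ range (m + 1), (noReturnCount (2 * i) * noReturnCount (2 * (m + 1) - 2 * i)
        + noReturnCount (2 * i + 1) * noReturnCount (2 * (m + 1) - (2 * i + 1)))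
        + noReturnCount (2 * (m + 1)) * noReturnCount 0
      = ∑ i ∈ range (m + 1), (i.centralBinom * (m + 1 - i).centralBinom
        + 4 * (i.centralBinom * (m - i).centralBinom))
        + (m + 1).centralBinom * (0 : ℕ).centralBinom := by
        congr 1
        · refine sum_congr rfl fun i hi => ?_
          rw [mem_range] at hi
          rw [show 2 * (m + 1) - 2 * i = 2 * (m + 1 - i) by omega,
            show 2 * (m + 1) - (2 * i + 1) = 2 * (m - i) + 1 by omega, noReturnCount_two_mul,
            noReturnCount_two_mul, noReturnCount_two_mul_add_one, noReturnCount_two_mul_add_one]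
          ring
        · rw [noReturnCount_two_mul, ← noReturnCount_two_mul 0]
    _ = 2 ^ (2 * (m + 1) + 1) := by
        rw [sum_add_distrib, ← mul_sum, sum_range_centralBinom_mul m, pow_succ, pow_mul,
          show 2 ^ 2 = 4 by rfl]
        omega

lemma sum_range_noReturnCount_mul_of_odd (m : ℕ) :
    ∑ j ∈ range (2 * m + 1 + 1), noReturnCount j * noReturnCount (2 * m + 1 - j)
      = 2 ^ (2 * m + 1 + 1) := by
  rw [show 2 * m + 1 + 1 = 2 * (m + 1) by ring, sum_range_two_mul]
  calc ∑ i ∈ range (m + 1), (noReturnCount (2 * i) * noReturnCount (2 * m + 1 - 2 * i)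
        + noReturnCount (2 * i + 1) * noReturnCount (2 * m + 1 - (2 * i + 1)))
      = ∑ i ∈ range (m + 1), 4 * (i.centralBinom * (m - i).centralBinom) := by
        refine sum_congr rfl fun i hi => ?_
        rw [mem_range] at hi
        rw [show 2 * m + 1 - 2 * i = 2 * (m - i) + 1 by omega,
          show 2 * m + 1 - (2 * i + 1) = 2 * (m - i) by omega, noReturnCount_two_mul,
          noReturnCount_two_mul, noReturnCount_two_mul_add_one, noReturnCount_two_mul_add_one]
        ring
    _ = 2 ^ (2 * (m + 1)) := by rw [← mul_sum, sum_range_centralBinom_mul, pow_mul]; ring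

lemma sum_range_noReturnCount_mul {n : ℕ} (hn : 1 ≤ n) :
    ∑ j ∈ range (n + 1), noReturnCount j * noReturnCount (n - j) = 2 ^ (n + 1) := by
  obtain ⟨m, rfl | rfl⟩ := Nat.even_or_odd' n
  · obtain ⟨k, rfl⟩ : ∃ k, m = k + 1 := ⟨m - 1, by omega⟩
    exact sum_range_noReturnCount_mul_of_even k
  · exact sum_range_noReturnCount_mul_of_odd m

lemma walk_extend_comp_rev {j : ℕ} (ε : Fin j → Bool) {t : ℕ} (ht : t ≤ j) :
    walk (extend (ε ∘ Fin.rev)) t = walk (extend ε) j - walk (extend ε) (j - t) := by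
  induction t with
  | zero => simp
  | succ t ih =>
    have hsucc := walk_succ (extend ε) (j - (t + 1))
    rw [show j - (t + 1) + 1 = j - t by omega] at hsucc
    have hrev : extend (ε ∘ Fin.rev) t = extend ε (j - (t + 1)) := by
      rw [extend_of_lt _ (by omega : t < j), extend_of_lt _ (by omega : j - (t + 1) < j)]
      rfl
    rw [walk_succ, ih (by omega), hsucc, hrev]
    ring

lemma pathCount_forall_walk_ne_eq_noReturnCount (j : ℕ) :
    pathCount j (fun f => ∀ i < j, walk f i ≠ walk f j) = noReturnCount j := by
  refine card_nbij' (· ∘ Fin.rev) (· ∘ Fin.rev) (fun ε hε => ?_) (fun ε hε => ?_)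
    (fun ε _ => funext fun _ => by simp) (fun ε _ => funext fun _ => by simp)
  · simp only [coe_filter, mem_univ, true_and, Set.mem_ofPred_eq] at hε ⊢
    intro k hk hkj
    rw [walk_extend_comp_rev ε hkj, sub_ne_zero]
    exact (hε (j - k) (by omega)).symm
  · simp only [coe_filter, mem_univ, true_and, Set.mem_ofPred_eq] at hε ⊢
    intro i hij
    rw [walk_extend_comp_rev ε hij.le, walk_extend_comp_rev ε le_rfl, Nat.sub_self, walk_zero,
      sub_zero, Ne, sub_eq_self]
    exact hε (j - i) (by omega) (by omega)

lemma dependsOn_forall_walk_ne (j : ℕ) :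
    DependsOn (fun f => ∀ i < j, walk f i ≠ walk f j) (Set.Iio j) := fun f g h => by
  change (∀ i < j, walk f i ≠ walk f j) = (∀ i < j, walk g i ≠ walk g j)
  simp only [walk_congr h le_rfl]
  exact propext <| forall_congr' fun i => imp_congr_right fun hi => by
    rw [walk_congr h hi.le]

lemma forall_walk_ne_iff (f : ℕ → Bool) (j k : ℕ) :
    (∀ i ≤ j + k, i ≠ j → walk f i ≠ walk f j) ↔
      (∀ i < j, walk f i ≠ walk f j) ∧ NoReturn k (fun t => f (j + t)) := by
  simp only [NoReturn, walk_shift_eq_sub, sub_ne_zero]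
  constructor
  · intro h
    exact ⟨fun i hi => h i (by omega) hi.ne, fun t ht htk => h (j + t) (by omega) (by omega)⟩
  · rintro ⟨hbefore, hafter⟩ i hi hij
    rcases hij.lt_or_gt with hij | hij
    · exact hbefore i hij
    · simpa [Nat.add_sub_cancel' hij.le] using hafter (i - j) (by omega) (by omega)

lemma sum_card_uniqueTimes_walk (n : ℕ) :
    ∑ ε : Fin n → Bool, #(uniqueTimes (walk (extend ε)) n)
      = ∑ j ∈ range (n + 1), noReturnCount j * noReturnCount (n - j) := by
  simp only [uniqueTimes, card_filter]
  rw [sum_comm]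
  refine sum_congr rfl fun j hj => ?_
  obtain ⟨k, rfl⟩ := Nat.exists_eq_add_of_le (mem_range_succ_iff.mp hj)
  rw [Nat.add_sub_cancel_left, ← pathCount_forall_walk_ne_eq_noReturnCount, noReturnCount,
    ← pathCount_add (dependsOn_forall_walk_ne j) (dependsOn_noReturn k), pathCount, card_filter]
  congr! 3 with ε
  exact forall_walk_ne_iff _ j k

section Probability

variable {Ω : Type*}

def stepsOf (S : ℕ → Ω → ℤ) (n : ℕ) (ω : Ω) : Fin n → Bool :=
  fun k => decide (S (k + 1) ω = S k ω + 1)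

lemma measurable_stepsOf [MeasurableSpace Ω] {S : ℕ → Ω → ℤ} (hmeas : ∀ n, Measurable (S n))
    (n : ℕ) :
    Measurable (stepsOf S n) :=
  measurable_pi_lambda _ fun k => measurable_to_bool <| by
    convert measurableSet_eq_fun (hmeas (k + 1)) ((hmeas k).add_const 1) using 1
    ext
    simp [stepsOf]

lemma step_decide_eq_sub {S : ℕ → Ω → ℤ}
    (hstep : ∀ ω n, S (n + 1) ω = S n ω + 1 ∨ S (n + 1) ω = S n ω - 1) (ω : Ω) (k : ℕ) :
    step (decide (S (k + 1) ω = S k ω + 1)) = S (k + 1) ω - S k ω := by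
  rcases hstep ω k with h | h
  · simp [step, h]
  · simp [step, h]
    omega

lemma eq_walk_stepsOf {S : ℕ → Ω → ℤ} (h0 : ∀ ω, S 0 ω = 0)
    (hstep : ∀ ω n, S (n + 1) ω = S n ω + 1 ∨ S (n + 1) ω = S n ω - 1) (ω : Ω) {n i : ℕ}
    (hi : i ≤ n) : S i ω = walk (extend (stepsOf S n ω)) i := by
  induction i with
  | zero => simp [h0]
  | succ i ih =>
    rw [walk_succ, ← ih (by omega), extend_of_lt _ (by omega : i < n), stepsOf,
      step_decide_eq_sub hstep]
    ring

lemma preimage_stepsOf_singleton {S : ℕ → Ω → ℤ} (h0 : ∀ ω, S 0 ω = 0)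
    (hstep : ∀ ω n, S (n + 1) ω = S n ω + 1 ∨ S (n + 1) ω = S n ω - 1) {n : ℕ}
    (ε : Fin n → Bool) :
    stepsOf S n ⁻¹' {ε} = {ω | ∀ i ≤ n, S i ω = walk (extend ε) i} := by
  ext ω
  simp only [Set.mem_preimage, Set.mem_singleton_iff, Set.mem_ofPred_eq]
  constructor
  · rintro rfl i hi
    exact eq_walk_stepsOf h0 hstep ω hi
  · intro h
    funext k
    have hk := walk_succ (extend ε) k
    rw [← h k (by omega), ← h (k + 1) (by omega), extend_of_lt _ k.is_lt] at hk
    cases hε : ε k <;> simp_all [stepsOf, step]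

lemma measure_forall_eq_walk [MeasurableSpace Ω] (μ : Measure Ω) [IsProbabilityMeasure μ]
    {S : ℕ → Ω → ℤ} (h0 : ∀ ω, S 0 ω = 0)
    (hup : ∀ (n : ℕ) (a : ℕ → ℤ), μ ({ω | ∀ i ≤ n, S i ω = a i} ∩ {ω | S (n + 1) ω = a n + 1})
      = (1 / 2) * μ {ω | ∀ i ≤ n, S i ω = a i})
    (hdown : ∀ (n : ℕ) (a : ℕ → ℤ), μ ({ω | ∀ i ≤ n, S i ω = a i} ∩ {ω | S (n + 1) ω = a n - 1})
      = (1 / 2) * μ {ω | ∀ i ≤ n, S i ω = a i})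
    (f : ℕ → Bool) (m : ℕ) :
    μ {ω | ∀ i ≤ m, S i ω = walk f i} = (1 / 2) ^ m := by
  induction m with
  | zero => simp [h0]
  | succ m ih =>
    have hsplit : {ω | ∀ i ≤ m + 1, S i ω = walk f i}
        = {ω | ∀ i ≤ m, S i ω = walk f i} ∩ {ω | S (m + 1) ω = walk f (m + 1)} := by
      ext ω
      simp only [Set.mem_ofPred_eq, Set.mem_inter_iff, Nat.le_succ_iff_eq_or_le]
      constructor
      · intro h
        exact ⟨fun i hi => h i (Or.inr hi), h (m + 1) (Or.inl rfl)⟩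
      · rintro ⟨h, hlast⟩ i (rfl | hi)
        exacts [hlast, h i hi]
    rw [hsplit, walk_succ, pow_succ, ← ih, mul_comm]
    cases f m
    · exact hdown m (walk f)
    · exact hup m (walk f)

end Probability

end SimpleRandomWalk

open SimpleRandomWalk ProbabilityTheory

/-- Newman's identity: For simple random walk `S` on ℤ started at `0`,
the expected number of sites visited exactly once by time `n` equals `2`, for all
`n ≥ 1`. -/
theorem newman_identity
    {Ω : Type*} [MeasureSpace Ω] [IsProbabilityMeasure (ℙ : Measure Ω)]
    (S : ℕ → Ω → ℤ) (hmeas : ∀ n, Measurable (S n))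
    (h0 : ∀ ω, S 0 ω = 0)
    (hstep : ∀ ω n, S (n + 1) ω = S n ω + 1 ∨ S (n + 1) ω = S n ω - 1)
    (hup : ∀ (n : ℕ) (a : ℕ → ℤ),
      ℙ ({ω | ∀ i ≤ n, S i ω = a i} ∩ {ω | S (n + 1) ω = a n + 1})
        = (1 / 2) * ℙ {ω | ∀ i ≤ n, S i ω = a i})
    (hdown : ∀ (n : ℕ) (a : ℕ → ℤ),
      ℙ ({ω | ∀ i ≤ n, S i ω = a i} ∩ {ω | S (n + 1) ω = a n - 1})
        = (1 / 2) * ℙ {ω | ∀ i ≤ n, S i ω = a i})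
    :
    ∀ n : ℕ, 1 ≤ n →
      (∫ ω, (Set.ncard {x : ℤ | ∃! j : ℕ, j ≤ n ∧ S j ω = x} : ℝ) ∂(ℙ : Measure Ω))
        = 2 := by
  intro n hn
  have hcount (ω : Ω) : {x : ℤ | ∃! j : ℕ, j ≤ n ∧ S j ω = x}.ncard
      = #(uniqueTimes (walk (extend (stepsOf S n ω))) n) := by
    rw [ncard_existsUnique_eq_card_uniqueTimes,
      uniqueTimes_congr fun i hi => eq_walk_stepsOf h0 hstep ω hi]
  have hprob (ε : Fin n → Bool) : (ℙ : Measure Ω).real (stepsOf S n ⁻¹' {ε}) = (1 / 2) ^ n := by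
    rw [measureReal_def, preimage_stepsOf_singleton h0 hstep,
      measure_forall_eq_walk ℙ h0 hup hdown]
    simp
  calc (∫ ω, (Set.ncard {x : ℤ | ∃! j : ℕ, j ≤ n ∧ S j ω = x} : ℝ) ∂(ℙ : Measure Ω))
      = ∫ ω, (#(uniqueTimes (walk (extend (stepsOf S n ω))) n) : ℝ) ∂(ℙ : Measure Ω) := by
        simp_rw [hcount]
    _ = ∑ ε : Fin n → Bool, (1 / 2) ^ n * (#(uniqueTimes (walk (extend ε)) n) : ℝ) := by
        rw [integral_comp_eq_sum (measurable_stepsOf hmeas n)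
          fun ε => (#(uniqueTimes (walk (extend ε)) n) : ℝ)]
        simp_rw [hprob]
    _ = (1 / 2) ^ n * 2 ^ (n + 1) := by
        rw [← mul_sum, ← Nat.cast_sum, sum_card_uniqueTimes_walk, sum_range_noReturnCount_mul hn]
        push_cast
        rfl
    _ = 2 := by rw [pow_succ, ← mul_assoc, ← mul_pow]; norm_num
end
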